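/- arXiv:2401.04951 — 5 statements merged into one kernel-verified Lean document; each statement's English description precedes it below -/
import Mathlib

section
/- Let T ∈ G be elliptic. Then (i) there exists S ∈ G such that S⁻¹ ∘ T ∘ S is a unitary operator of the Hilbert space H ⊕ ℂ, and (ii) the spectrum of T, as a bounded operator on H ⊕ ℂ, is contained in the unit circle {μ ∈ ℂ : |μ| = 1}. -/
noncomputable section

variable {H : Type*} [NormedAddCommGroup H] [InnerProductSpace ℂ H] [CompleteSpace H]

/-- The Hermitian form `A((x,z),(y,w)) = ⟨x,y⟩ - z·conj w` on `H ⊕ ℂ`, linear in the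
first argument (the paper's convention); `⟨x,y⟩` (linear in `x`) is `inner y x` in Mathlib. -/
def formA (u v : H × ℂ) : ℂ :=
  (inner ℂ v.1 u.1 : ℂ) - u.2 * (starRingEnd ℂ) v.2

/-- The standard inner product of the Hilbert space `H ⊕ ℂ`, linear in the first argument. -/
def ipStd (u v : H × ℂ) : ℂ :=
  (inner ℂ v.1 u.1 : ℂ) + u.2 * (starRingEnd ℂ) v.2

/-- Membership in the group `G` of bounded bijective linear maps preserving `A`. -/
def memG (T : (H × ℂ) →L[ℂ] (H × ℂ)) : Prop :=
  Function.Bijective T ∧ ∀ u v : H × ℂ, formA (T u) (T v) = formA u v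

/-- `T` is elliptic: it has an eigenvector `(x,1)` with `‖x‖ < 1`. -/
def IsEllipticG (T : (H × ℂ) →L[ℂ] (H × ℂ)) : Prop :=
  ∃ x : H, ‖x‖ < 1 ∧ ∃ μ : ℂ, T (x, 1) = μ • ((x, 1) : H × ℂ)

/-- Points `x` of the closed unit ball with `(x,1)` an eigenvector of `T`. -/
def fixedBall (T : (H × ℂ) →L[ℂ] (H × ℂ)) : Set H :=
  {x : H | ‖x‖ ≤ 1 ∧ ∃ μ : ℂ, T (x, 1) = μ • ((x, 1) : H × ℂ)}

/-- `T` is hyperbolic: not elliptic, with exactly two fixed points in the closed ball. -/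
def IsHyperbolicG (T : (H × ℂ) →L[ℂ] (H × ℂ)) : Prop :=
  ¬ IsEllipticG T ∧ ∃ x y : H, x ≠ y ∧ fixedBall T = {x, y}

/-- `T` is parabolic: not elliptic, with exactly one fixed point in the closed ball. -/
def IsParabolicG (T : (H × ℂ) →L[ℂ] (H × ℂ)) : Prop :=
  ¬ IsEllipticG T ∧ ∃ x : H, fixedBall T = {x}

/-- `M†`, the `A`-orthogonal complement of a subspace `M` of `H ⊕ ℂ`. -/
def daggerA (M : Submodule ℂ (H × ℂ)) : Submodule ℂ (H × ℂ) where
  carrier := {v | ∀ m ∈ M, formA v m = 0}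
  add_mem' := by
    intro a b ha hb m hm
    have h1 := ha m hm
    have h2 := hb m hm
    simp only [formA, Prod.fst_add, Prod.snd_add, inner_add_right, add_mul] at *
    linear_combination h1 + h2
  zero_mem' := by
    intro m hm
    simp [formA]
  smul_mem' := by
    intro c a ha m hm
    have h1 := ha m hm
    simp only [formA, Prod.smul_fst, Prod.smul_snd, inner_smul_right, smul_eq_mul] at *
    linear_combination c * h1

/-- The norm induced by `A` on a subspace where `A` is positive. -/
def nA (v : H × ℂ) : ℝ := Real.sqrt (formA v v).re

/-- Sequential completeness of a subspace for the norm induced by `A`. -/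
def CompleteForA (M : Submodule ℂ (H × ℂ)) : Prop :=
  ∀ f : ℕ → H × ℂ, (∀ n, f n ∈ M) →
    (∀ ε : ℝ, 0 < ε → ∃ N : ℕ, ∀ m n : ℕ, N ≤ m → N ≤ n → nA (f m - f n) < ε) →
    ∃ v ∈ M, ∀ ε : ℝ, 0 < ε → ∃ N : ℕ, ∀ n : ℕ, N ≤ n → nA (f n - v) < ε

end

/-!
An elliptic `T` fixes a point `x` of the open ball. A hyperbolic boost `S ∈ G` moves the centre
`0` to `x`, so `B = S⁻¹ T S` has `(0, 1)` as an eigenvector. Since `B` preserves `A`, its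
eigenvalue `μ` has modulus one, and pairing with `(0, 1)` shows that `B` multiplies second
coordinates by `μ`. The Hilbert inner product is `A` plus twice the product of the second
coordinates, so `B` preserves it: `B` is unitary. The spectrum of `T` is that of
its conjugate `B`, which lies on the unit circle.
-/

theorem ContinuousLinearMap.mem_unitary_of_inner_map_map {𝕜 E : Type*} [RCLike 𝕜]
    [NormedAddCommGroup E] [InnerProductSpace 𝕜 E] [CompleteSpace E] {U : E →L[𝕜] E}
    (hU : Function.Surjective U) (h : ∀ x y, inner 𝕜 (U x) (U y) = inner 𝕜 x y) :
    U ∈ unitary (E →L[𝕜] E) :=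
  (Unitary.linearIsometryEquiv.symm
    (LinearIsometryEquiv.ofSurjective (U.toLinearMap.isometryOfInner h) hU)).property

section
variable {H : Type*} [NormedAddCommGroup H] [InnerProductSpace ℂ H]

theorem memG.comp {T T' : (H × ℂ) →L[ℂ] (H × ℂ)} (hT : memG T) (hT' : memG T') :
    memG (T ∘L T') :=
  ⟨hT.1.comp hT'.1, fun u v => (hT.2 _ _).trans (hT'.2 u v)⟩

theorem memG_symm {S : (H × ℂ) ≃L[ℂ] (H × ℂ)} (hS : memG (S : (H × ℂ) →L[ℂ] (H × ℂ))) :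
    memG (S.symm : (H × ℂ) →L[ℂ] (H × ℂ)) :=
  ⟨S.symm.bijective, fun u v => by simpa using (hS.2 (S.symm u) (S.symm v)).symm⟩

/-- The Lorentz boost along the unit vector `e` with `c = cosh t`, `b = sinh t`. -/
noncomputable def boost (e : H) (c b : ℝ) : (H × ℂ) →L[ℂ] (H × ℂ) :=
  let φ : (H × ℂ) →L[ℂ] ℂ := (innerSL ℂ e).comp (ContinuousLinearMap.fst ℂ H ℂ)
  let ψ : (H × ℂ) →L[ℂ] ℂ := ContinuousLinearMap.snd ℂ H ℂ
  (ContinuousLinearMap.fst ℂ H ℂ + (((c : ℂ) - 1) • φ + (b : ℂ) • ψ).smulRight e).prod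
    ((b : ℂ) • φ + (c : ℂ) • ψ)

@[simp]
theorem boost_apply (e : H) (c b : ℝ) (u : H × ℂ) :
    boost e c b u = (u.1 + (((c : ℂ) - 1) * inner ℂ e u.1 + b * u.2) • e,
      b * inner ℂ e u.1 + c * u.2) := by
  simp [boost]

variable {e : H} {c b : ℝ}

theorem boost_neg_boost (he : ‖e‖ = 1) (hcb : c ^ 2 - b ^ 2 = 1) (u : H × ℂ) :
    boost e c (-b) (boost e c b u) = u := by
  have hee : inner ℂ e e = (1 : ℂ) := by simp [inner_self_eq_norm_sq_to_K, he]
  have hcb' : (c : ℂ) ^ 2 - (b : ℂ) ^ 2 = 1 := by exact_mod_cast hcb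
  ext
  · simp only [boost_apply, inner_add_right, inner_smul_right, hee, Complex.ofReal_neg]
    match_scalars
    · ring
    · linear_combination inner ℂ e u.1 * hcb'
  · simp only [boost_apply, inner_add_right, inner_smul_right, hee, Complex.ofReal_neg]
    linear_combination u.2 * hcb'

theorem formA_boost (he : ‖e‖ = 1) (hcb : c ^ 2 - b ^ 2 = 1) (u v : H × ℂ) :
    formA (boost e c b u) (boost e c b v) = formA u v := by
  have hee : inner ℂ e e = (1 : ℂ) := by simp [inner_self_eq_norm_sq_to_K, he]
  have hcb' : (c : ℂ) ^ 2 - (b : ℂ) ^ 2 = 1 := by exact_mod_cast hcb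
  simp only [formA, boost_apply, inner_add_left, inner_add_right, inner_smul_left,
    inner_smul_right, hee, map_add, map_sub, map_mul, map_one, Complex.conj_ofReal, inner_conj_symm]
  linear_combination (inner ℂ e u.1 * inner ℂ v.1 e - u.2 * (starRingEnd ℂ) v.2) * hcb'

noncomputable def boostEquiv (he : ‖e‖ = 1) (hcb : c ^ 2 - b ^ 2 = 1) : (H × ℂ) ≃L[ℂ] (H × ℂ) :=
  .equivOfInverse (boost e c b) (boost e c (-b)) (boost_neg_boost he hcb)
    fun u => by
      simpa only [neg_neg] using boost_neg_boost (b := -b) he (by rwa [neg_sq]) u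

theorem memG_boostEquiv (he : ‖e‖ = 1) (hcb : c ^ 2 - b ^ 2 = 1) :
    memG (boostEquiv he hcb : (H × ℂ) →L[ℂ] (H × ℂ)) :=
  ⟨(boostEquiv he hcb).bijective, formA_boost he hcb⟩

theorem exists_memG_map_zero_one {x : H} (hx : ‖x‖ < 1) :
    ∃ S : (H × ℂ) ≃L[ℂ] (H × ℂ), memG (S : (H × ℂ) →L[ℂ] (H × ℂ)) ∧
      ∃ k : ℂ, S (0, 1) = k • (x, 1) := by
  rcases eq_or_ne x 0 with rfl | hx0
  · exact ⟨.refl ℂ _, ⟨Function.bijective_id, fun _ _ => rfl⟩, 1, by simp⟩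
  have hnx : ‖x‖ ≠ 0 := norm_ne_zero_iff.mpr hx0
  have hpos : 0 < 1 - ‖x‖ ^ 2 := by nlinarith [norm_nonneg x]
  set c : ℝ := (√(1 - ‖x‖ ^ 2))⁻¹
  have hc : c ^ 2 * (1 - ‖x‖ ^ 2) = 1 := by
    rw [inv_pow, Real.sq_sqrt hpos.le, inv_mul_cancel₀ hpos.ne']
  have he : ‖(‖x‖⁻¹ : ℂ) • x‖ = 1 := by
    rw [norm_smul, norm_inv, Complex.norm_real, Real.norm_of_nonneg (norm_nonneg x),
      inv_mul_cancel₀ hnx]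
  have hcb : c ^ 2 - (c * ‖x‖) ^ 2 = 1 := by linear_combination hc
  refine ⟨boostEquiv he hcb, memG_boostEquiv he hcb, c, ?_⟩
  change boost _ _ _ _ = _
  ext
  · simp [smul_smul, hnx]
  · simp

theorem ipStd_eq_formA_add (u v : H × ℂ) :
    ipStd u v = formA u v + 2 * (u.2 * starRingEnd ℂ v.2) := by
  simp only [ipStd, formA]; ring

theorem ipStd_map_of_eigen_zero_one {T : (H × ℂ) →L[ℂ] (H × ℂ)}
    (hT : ∀ u v, formA (T u) (T v) = formA u v) {μ : ℂ} (hμ : T (0, 1) = μ • (0, 1))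
    (u v : H × ℂ) : ipStd (T u) (T v) = ipStd u v := by
  have hnorm : μ * starRingEnd ℂ μ = 1 := by
    simpa [formA, hμ] using hT (0, 1) (0, 1)
  have hsnd : ∀ w, (T w).2 * starRingEnd ℂ μ = w.2 := fun w => by
    simpa [formA, hμ] using hT w (0, 1)
  have hsnd' : starRingEnd ℂ (T v).2 * μ = starRingEnd ℂ v.2 := by
    simpa using congrArg (starRingEnd ℂ) (hsnd v)
  rw [ipStd_eq_formA_add, ipStd_eq_formA_add, hT]
  linear_combination 2 * (-(T u).2 * starRingEnd ℂ (T v).2 * hnorm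
    + (T u).2 * starRingEnd ℂ μ * hsnd' + starRingEnd ℂ v.2 * hsnd u)

theorem ipStd_eq_inner_toLp (u v : H × ℂ) :
    ipStd u v = inner ℂ (WithLp.toLp 2 v) (WithLp.toLp 2 u) := by
  simp [ipStd]

theorem spectrum_subset_sphere_of_ipStd [CompleteSpace H] {B : (H × ℂ) →L[ℂ] (H × ℂ)}
    (hB : Function.Surjective B) (h : ∀ u v, ipStd (B u) (B v) = ipStd u v) :
    spectrum ℂ B ⊆ Metric.sphere 0 1 := by
  set W := (WithLp.prodContinuousLinearEquiv 2 ℂ H ℂ).symm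
  rw [← AlgEquiv.spectrum_eq W.conjContinuousAlgEquiv B]
  refine spectrum.subset_circle_of_unitary
    (ContinuousLinearMap.mem_unitary_of_inner_map_map ?_ fun x y => ?_)
  · exact W.surjective.comp (hB.comp W.symm.surjective)
  · simpa [W, ipStd_eq_inner_toLp] using h (WithLp.ofLp y) (WithLp.ofLp x)

end

section
variable {H : Type*} [NormedAddCommGroup H] [InnerProductSpace ℂ H] [CompleteSpace H]

/-- an elliptic `T ∈ G` is unitary up to conjugacy in `G`, and its
spectrum is contained in the unit circle. -/
theorem elliptic_conjUnitary_and_spectrum (T : (H × ℂ) →L[ℂ] (H × ℂ))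
    (hT : memG T) (hell : IsEllipticG T) :
    (∃ S : (H × ℂ) ≃L[ℂ] (H × ℂ), memG (S : (H × ℂ) →L[ℂ] (H × ℂ)) ∧
      (Function.Bijective
        (S.symm.toContinuousLinearMap ∘L T ∘L S.toContinuousLinearMap) ∧
       ∀ u v : H × ℂ,
        ipStd ((S.symm.toContinuousLinearMap ∘L T ∘L S.toContinuousLinearMap) u)
              ((S.symm.toContinuousLinearMap ∘L T ∘L S.toContinuousLinearMap) v)
          = ipStd u v)) ∧
    (∀ μ ∈ spectrum ℂ T, ‖μ‖ = 1) := by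
  obtain ⟨x, hx, μ, hμ⟩ := hell
  obtain ⟨S, hS, k, hSx⟩ := exists_memG_map_zero_one hx
  set B := S.symm.toContinuousLinearMap ∘L T ∘L S.toContinuousLinearMap
  have hB : memG B := (memG_symm hS).comp (hT.comp hS)
  have hBμ : B (0, 1) = μ • (0, 1) := by
    change S.symm (T (S (0, 1))) = _
    rw [hSx, map_smul, hμ, smul_comm, map_smul, ← hSx, S.symm_apply_apply]
  have hBip := ipStd_map_of_eigen_zero_one hB.2 hBμ
  refine ⟨⟨S, hS, hB.1, hBip⟩, fun ν hν => ?_⟩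
  have hTB : T = S.conjContinuousAlgEquiv B := ContinuousLinearMap.ext fun u => by simp [B]
  rw [hTB, AlgEquiv.spectrum_eq] at hν
  simpa using spectrum_subset_sphere_of_ipStd hB.1.2 hBip hν

end
end

section
/- Let T ∈ G be elliptic with eigenvector (x,1), ‖x‖ < 1, and let M = ℂ·(x,1). Then H ⊕ ℂ = M ⊕ M^† (internal direct sum), T maps M^† bijectively onto M^†, the form A is positive definite on M^†, M^† is complete for the norm induced by A, and the restriction of T to M^† is a surjective linear isometry of the Hilbert space (M^†, A), i.e. a unitary operator of (M^†, A). -/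
/-!
On `M† = {v : A(v, e) = 0}` with `e = (x, 1)` the second coordinate of `v` is determined by the
first, `v.2 = ⟨x, v.1⟩`, so `|v.2| ≤ ‖x‖ ‖v.1‖` and
`(1 - ‖x‖²) ‖v.1‖² ≤ Q(v) ≤ ‖v.1‖²`. Hence for `‖x‖ < 1` the projection `v ↦ v.1` is an
isomorphism of `(M†, √Q)` onto the Hilbert space `H`, which gives positivity and completeness.
Since `Q(e) = ‖x‖² - 1 ≠ 0`, `e` is non-isotropic and `M ⊕ M†` is the whole space; `T` preserves
`A` and fixes the line `M`, hence preserves `M†`.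
-/

open Submodule

section
variable {H : Type*} [NormedAddCommGroup H] [InnerProductSpace ℂ H]

lemma formA_smul_left (c : ℂ) (u v : H × ℂ) : formA (c • u) v = c * formA u v := by
  simp only [formA, Prod.smul_fst, Prod.smul_snd, inner_smul_right, smul_eq_mul]
  ring

lemma formA_smul_right (c : ℂ) (u v : H × ℂ) :
    formA u (c • v) = starRingEnd ℂ c * formA u v := by
  simp only [formA, Prod.smul_fst, Prod.smul_snd, inner_smul_left, smul_eq_mul, map_mul]
  ring

lemma formA_sub_left (u w v : H × ℂ) : formA (u - w) v = formA u v - formA w v := by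
  simp only [formA, Prod.fst_sub, Prod.snd_sub, inner_sub_right]
  ring

lemma formA_self_re (v : H × ℂ) : (formA v v).re = ‖v.1‖ ^ 2 - Complex.normSq v.2 := by
  rw [formA, Complex.mul_conj, Complex.sub_re, Complex.ofReal_re,
    ← RCLike.re_eq_complex_re, inner_self_eq_norm_sq]

lemma formA_self_im (v : H × ℂ) : (formA v v).im = 0 := by
  rw [formA, Complex.mul_conj, Complex.sub_im, Complex.ofReal_im,
    ← RCLike.im_eq_complex_im, inner_self_im, sub_zero]

lemma formA_self_re_le (v : H × ℂ) : (formA v v).re ≤ ‖v.1‖ ^ 2 := by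
  rw [formA_self_re]
  linarith [Complex.normSq_nonneg v.2]

lemma nA_le_norm_fst (v : H × ℂ) : nA v ≤ ‖v.1‖ :=
  (Real.sqrt_le_left (norm_nonneg _)).mpr (formA_self_re_le v)

lemma mem_daggerA_span_singleton {e v : H × ℂ} :
    v ∈ daggerA (ℂ ∙ e) ↔ formA v e = 0 := by
  refine ⟨fun h => h e (mem_span_singleton_self e), fun h m hm => ?_⟩
  obtain ⟨c, rfl⟩ := mem_span_singleton.mp hm
  rw [formA_smul_right, h, mul_zero]

lemma isCompl_span_singleton_daggerA {e : H × ℂ} (he : formA e e ≠ 0) :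
    IsCompl (ℂ ∙ e) (daggerA (ℂ ∙ e)) := by
  constructor
  · refine disjoint_def.mpr fun v hv hv' => ?_
    obtain ⟨c, rfl⟩ := mem_span_singleton.mp hv
    rw [mem_daggerA_span_singleton, formA_smul_left] at hv'
    rw [(mul_eq_zero.mp hv').resolve_right he, zero_smul]
  · refine codisjoint_iff.mpr (eq_top_iff.mpr fun v _ => ?_)
    set c := formA v e / formA e e
    refine mem_sup.mpr ⟨c • e, smul_mem _ _ (mem_span_singleton_self e), v - c • e, ?_,
      add_sub_cancel _ _⟩
    rw [mem_daggerA_span_singleton, formA_sub_left, formA_smul_left,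
      div_mul_cancel₀ _ he, sub_self]

lemma mem_daggerA_span_pair_iff {x : H} {v : H × ℂ} :
    v ∈ daggerA (ℂ ∙ ((x, 1) : H × ℂ)) ↔ (inner ℂ x v.1 : ℂ) = v.2 := by
  simp [mem_daggerA_span_singleton, formA, sub_eq_zero]

lemma formA_self_re_ge {x : H} {v : H × ℂ} (hv : (inner ℂ x v.1 : ℂ) = v.2) :
    (1 - ‖x‖ ^ 2) * ‖v.1‖ ^ 2 ≤ (formA v v).re := by
  have h : ‖v.2‖ ≤ ‖x‖ * ‖v.1‖ := hv ▸ norm_inner_le_norm x v.1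
  rw [formA_self_re, Complex.normSq_eq_norm_sq]
  nlinarith [norm_nonneg v.2]

lemma sqrt_mul_norm_fst_le_nA {x : H} {v : H × ℂ} (hv : (inner ℂ x v.1 : ℂ) = v.2) :
    √(1 - ‖x‖ ^ 2) * ‖v.1‖ ≤ nA v := by
  rw [← Real.sqrt_sq (norm_nonneg v.1), ← Real.sqrt_mul' _ (sq_nonneg _)]
  exact Real.sqrt_le_sqrt (formA_self_re_ge hv)

lemma formA_pair_self_ne_zero {x : H} (hx : ‖x‖ < 1) : formA ((x, 1) : H × ℂ) (x, 1) ≠ 0 := by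
  intro h
  have h_re := congrArg Complex.re h
  rw [formA_self_re, Complex.normSq_one, Complex.zero_re] at h_re
  nlinarith [norm_nonneg x]

lemma formA_self_pos_of_mem_daggerA {x : H} (hx : ‖x‖ < 1) {v : H × ℂ}
    (hv : v ∈ daggerA (ℂ ∙ ((x, 1) : H × ℂ))) (hv0 : v ≠ 0) : 0 < (formA v v).re := by
  rw [mem_daggerA_span_pair_iff] at hv
  have hv1 : v.1 ≠ 0 := fun h => hv0 (Prod.ext h (by rw [← hv, h, inner_zero_right]; rfl))
  have hx2 : 0 < 1 - ‖x‖ ^ 2 := by nlinarith [norm_nonneg x]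
  exact (mul_pos hx2 (by positivity)).trans_le (formA_self_re_ge hv)

lemma completeForA_daggerA [CompleteSpace H] {x : H} (hx : ‖x‖ < 1) :
    CompleteForA (daggerA (ℂ ∙ ((x, 1) : H × ℂ))) := by
  intro f hf hcau
  set c := √(1 - ‖x‖ ^ 2)
  have hc : 0 < c := Real.sqrt_pos.mpr (by nlinarith [norm_nonneg x])
  have hfst : CauchySeq fun n => (f n).1 := by
    refine Metric.cauchySeq_iff.mpr fun ε hε => ?_
    obtain ⟨N, hN⟩ := hcau (c * ε) (by positivity)
    refine ⟨N, fun m hm n hn => ?_⟩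
    have hmn := sqrt_mul_norm_fst_le_nA
      (mem_daggerA_span_pair_iff.mp (sub_mem (hf m) (hf n)))
    rw [dist_eq_norm, ← Prod.fst_sub]
    exact lt_of_mul_lt_mul_left (hmn.trans_lt (hN m n hm hn)) hc.le
  obtain ⟨y, hy⟩ := cauchySeq_tendsto_of_complete hfst
  refine ⟨(y, inner ℂ x y), mem_daggerA_span_pair_iff.mpr rfl, fun ε hε => ?_⟩
  obtain ⟨N, hN⟩ := Metric.tendsto_atTop.mp hy ε hε
  refine ⟨N, fun n hn => (nA_le_norm_fst _).trans_lt ?_⟩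
  simpa [dist_eq_norm] using hN n hn

lemma memG.mem_daggerA_iff {T : (H × ℂ) →L[ℂ] (H × ℂ)} (hT : memG T) {e : H × ℂ} {μ : ℂ}
    (hμ : μ ≠ 0) (heig : T e = μ • e) (v : H × ℂ) :
    T v ∈ daggerA (ℂ ∙ e) ↔ v ∈ daggerA (ℂ ∙ e) := by
  have h := hT.2 v e
  rw [heig, formA_smul_right] at h
  rw [mem_daggerA_span_singleton, mem_daggerA_span_singleton, ← h,
    mul_eq_zero, map_eq_zero, or_iff_right hμ]

lemma memG.bijOn_daggerA {T : (H × ℂ) →L[ℂ] (H × ℂ)} (hT : memG T) {e : H × ℂ} (he : e ≠ 0)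
    {μ : ℂ} (heig : T e = μ • e) :
    Set.BijOn T (daggerA (ℂ ∙ e) : Set (H × ℂ)) (daggerA (ℂ ∙ e)) := by
  have hμ : μ ≠ 0 := by
    rintro rfl
    exact he (hT.1.1 (by rw [heig, zero_smul, map_zero]))
  exact (Equiv.ofBijective T hT.1).bijOn (hT.mem_daggerA_iff hμ heig)

end

section
variable {H : Type*} [NormedAddCommGroup H] [InnerProductSpace ℂ H] [CompleteSpace H]

/-- decomposition of `H ⊕ ℂ` along the time-like eigenvector of an
elliptic isometry; the restriction of `T` to `M†` is a unitary of the Hilbert space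
`(M†, A)`. -/
theorem elliptic_decomposition (T : (H × ℂ) →L[ℂ] (H × ℂ)) (hT : memG T)
    (x : H) (hx : ‖x‖ < 1) (μ : ℂ) (heig : T (x, 1) = μ • ((x, 1) : H × ℂ))
    (M : Submodule ℂ (H × ℂ)) (hM : M = Submodule.span ℂ {((x, 1) : H × ℂ)}) :
    -- internal direct sum H ⊕ ℂ = M ⊕ M†
    IsCompl M (daggerA M) ∧
    -- T maps M† bijectively onto M†
    Set.BijOn T (daggerA M : Set (H × ℂ)) (daggerA M : Set (H × ℂ)) ∧
    -- A is positive definite on M†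
    (∀ v ∈ daggerA M, v ≠ 0 → 0 < (formA v v).re ∧ (formA v v).im = 0) ∧
    -- M† is complete for the norm induced by A
    CompleteForA (daggerA M) ∧
    -- the restriction of T to M† preserves A, i.e. it is a surjective linear
    -- isometry (unitary) of the Hilbert space (M†, A)
    (∀ u ∈ daggerA M, ∀ w ∈ daggerA M, formA (T u) (T w) = formA u w) := by
  subst hM
  refine ⟨isCompl_span_singleton_daggerA (formA_pair_self_ne_zero hx),
    hT.bijOn_daggerA (fun h => one_ne_zero (congrArg Prod.snd h)) heig,
    fun v hv hv0 => ⟨formA_self_pos_of_mem_daggerA hx hv hv0, formA_self_im v⟩,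
    completeForA_daggerA hx, fun u _ w _ => hT.2 u w⟩

end
end

section
/- Let λ ∈ ℂ and let Ŝ ∈ Ĝ be parabolic with spectrum σ(Ŝ) = {λ}. Then |λ| = 1, and there exist R̂ ∈ Ĝ, a' ∈ H orthogonal to e, and s ∈ ℂ with s ≠ 0 and Re s = (1/2)‖a'‖², such that R̂ ∘ Ŝ ∘ R̂⁻¹ is the Heisenberg translation (λ, a', s). -/
/-!
A parabolic `Ŝ` has a null eigenvector, whose eigenvalue lies in `σ(Ŝ) = {λ}`. `Ĝ` acts
transitively on null lines (a Heisenberg translation followed by the inversion exchanging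
`ℂ (e, 0)` and `ℂ (0, 1)`), so after conjugation `T = R̂ Ŝ R̂⁻¹` fixes the line `ℂ (e, 0)`.
Pairing with `(e, 0)` shows that `T` multiplies the last coordinate by `conj(λ)⁻¹`, which
therefore lies in `σ(T) = {λ}`; hence `|λ| = 1`. The map induced by `T` on
`H ⧸ ℂ e ≅ (ℂ ∙ e)ᗮ` is unitary, and by Gelfand's formula its difference with `λ` has spectral
radius at most that of `T - λ`, i.e. `0`; being normal, it vanishes. The remaining coefficients
of `T` are then fixed by `Â`-invariance, which makes `T` the Heisenberg translation
`(λ, a', s)`. Finally, `s = 0` would force `a' = 0` and `Ŝ = λ`, making `(e, 1)` a time-like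
eigenvector.
-/

noncomputable section

variable {H : Type*} [NormedAddCommGroup H] [InnerProductSpace ℂ H] [CompleteSpace H]

/-- The Hermitian form `Â((x,z),(y,w)) = -z·conj⟨y,e⟩ - ⟨x,e⟩·conj w + ⟨x',y'⟩`
(paper convention: linear in the first argument, with `⟨a,b⟩ = inner b a` in Mathlib,
and `x' = x - ⟨x,e⟩e`). -/
def hatA (e : H) (u v : H × ℂ) : ℂ :=
  - u.2 * (inner ℂ v.1 e : ℂ) - (inner ℂ e u.1 : ℂ) * (starRingEnd ℂ) v.2
    + (inner ℂ (v.1 - (inner ℂ e v.1 : ℂ) • e) (u.1 - (inner ℂ e u.1 : ℂ) • e) : ℂ)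

/-- Membership in the group `Ĝ` of bounded bijective linear maps preserving `Â`. -/
def memGhat (e : H) (T : (H × ℂ) →L[ℂ] (H × ℂ)) : Prop :=
  Function.Bijective T ∧ ∀ u v : H × ℂ, hatA e (T u) (T v) = hatA e u v

/-- `T` is the Heisenberg translation `(λ, a', s)`: an element of `Ĝ` sending
`(x,z)` to `λ·((⟨x,e⟩ + ⟨x',a'⟩ + s·z)·e + x' + z·a', z)`, where `|λ| = 1`,
`a' ⊥ e`, `s ≠ 0` and `Re s = ‖a'‖²/2`. -/
def IsHeisenberg (e : H) (T : (H × ℂ) →L[ℂ] (H × ℂ)) (lam : ℂ) (a' : H) (s : ℂ) :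
    Prop :=
  ‖lam‖ = 1 ∧ a' ∈ (ℂ ∙ e)ᗮ ∧ s ≠ 0 ∧ s.re = (1 / 2) * ‖a'‖ ^ 2 ∧
  memGhat e T ∧
  ∀ (x : H) (z : ℂ),
    T (x, z) = lam •
      (((((inner ℂ e x : ℂ) + (inner ℂ a' (x - (inner ℂ e x : ℂ) • e) : ℂ) + s * z) • e
          + (x - (inner ℂ e x : ℂ) • e) + z • a', z)) : H × ℂ)

/-- An element of `Ĝ` is parabolic: no time-like eigenvector, and exactly one
eigenline spanned by a light-like vector. -/
def IsParabolicGhat (e : H) (T : (H × ℂ) →L[ℂ] (H × ℂ)) : Prop :=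
  (¬ ∃ v : H × ℂ, v ≠ 0 ∧ (∃ μ : ℂ, T v = μ • v) ∧
      ∃ c : ℝ, c < 0 ∧ hatA e v v = (c : ℂ)) ∧
  (∃ v : H × ℂ, v ≠ 0 ∧ (∃ μ : ℂ, T v = μ • v) ∧ hatA e v v = 0 ∧
      ∀ w : H × ℂ, w ≠ 0 → (∃ μ : ℂ, T w = μ • w) → hatA e w w = 0 →
        ∃ c : ℂ, w = c • v)

end

open scoped InnerProductSpace ComplexConjugate

section SpectralRadius

variable {𝔸 𝔹 : Type*} [NormedRing 𝔸] [NormedAlgebra ℂ 𝔸] [CompleteSpace 𝔸]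
  [NormedRing 𝔹] [NormedAlgebra ℂ 𝔹] [CompleteSpace 𝔹]

theorem spectralRadius_le_of_forall_norm_pow_le {a : 𝔸} {b : 𝔹}
    (h : ∀ n : ℕ, ‖b ^ n‖ ≤ ‖a ^ n‖) : spectralRadius ℂ b ≤ spectralRadius ℂ a := by
  refine (spectrum.spectralRadius_le_liminf_pow_nnnorm_pow_one_div ℂ b).trans ?_
  rw [← (spectrum.pow_nnnorm_pow_one_div_tendsto_nhds_spectralRadius a).liminf_eq]
  refine Filter.liminf_le_liminf (Filter.Eventually.of_forall fun n => ?_)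
  gcongr
  exact_mod_cast h n

theorem IsStarNormal.eq_zero_of_spectralRadius_eq_zero {A : Type*} [CStarAlgebra A] {a : A}
    [IsStarNormal a] (h : spectralRadius ℂ a = 0) : a = 0 := by
  rw [IsStarNormal.spectralRadius_eq_nnnorm, ENNReal.coe_eq_zero] at h
  exact nnnorm_eq_zero.mp h

theorem IsStarNormal.sub_algebraMap {A : Type*} [Ring A] [StarRing A] [Algebra ℂ A]
    [StarModule ℂ A] (a : A) [IsStarNormal a] (z : ℂ) : IsStarNormal (a - algebraMap ℂ A z) := by
  have : IsStarNormal (algebraMap ℂ A z) :=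
    ⟨by rw [← algebraMap_star_comm]; exact Algebra.commute_algebraMap_left _ _⟩
  refine Commute.isStarNormal_sub ?_
  rw [← algebraMap_star_comm]
  exact Algebra.commute_algebraMap_right _ _

end SpectralRadius

section OperatorNorm

variable {𝕜 E F : Type*} [NontriviallyNormedField 𝕜] [NormedAddCommGroup E] [NormedSpace 𝕜 E]
  [NormedAddCommGroup F] [NormedSpace 𝕜 F] {A : E →L[𝕜] E} {B : F →L[𝕜] F}

theorem Function.Semiconj.sub_algebraMap {P : E →L[𝕜] F} (h : Function.Semiconj P A B) (c : 𝕜) :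
    Function.Semiconj P (A - algebraMap 𝕜 (E →L[𝕜] E) c) (B - algebraMap 𝕜 (F →L[𝕜] F) c) :=
  fun x => by simp [Algebra.algebraMap_eq_smul_one, h x]

theorem norm_pow_le_of_semiconj_of_norm_map {J : F →L[𝕜] E} (hJ : ∀ x, ‖J x‖ = ‖x‖)
    (h : Function.Semiconj J B A) (n : ℕ) : ‖B ^ n‖ ≤ ‖A ^ n‖ := by
  refine (B ^ n).opNorm_le_bound (norm_nonneg _) fun x => ?_
  calc ‖(B ^ n) x‖ = ‖(A ^ n) (J x)‖ := by
        rw [← hJ, FunLike.coe_pow_eq_iterate, FunLike.coe_pow_eq_iterate, (h.iterate_right n) x]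
    _ ≤ ‖A ^ n‖ * ‖x‖ := hJ x ▸ (A ^ n).le_opNorm (J x)

theorem norm_pow_le_of_semiconj_of_leftInverse {P : E →L[𝕜] F} {J : F →L[𝕜] E}
    (hP : ∀ y, ‖P y‖ ≤ ‖y‖) (hJ : ∀ x, ‖J x‖ ≤ ‖x‖) (hPJ : Function.LeftInverse P J)
    (h : Function.Semiconj P A B) (n : ℕ) : ‖B ^ n‖ ≤ ‖A ^ n‖ := by
  refine (B ^ n).opNorm_le_bound (norm_nonneg _) fun x => ?_
  calc ‖(B ^ n) x‖ = ‖P ((A ^ n) (J x))‖ := by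
        rw [FunLike.coe_pow_eq_iterate, FunLike.coe_pow_eq_iterate, (h.iterate_right n) (J x), hPJ]
    _ ≤ ‖A ^ n‖ * ‖x‖ :=
        (hP _).trans <| ((A ^ n).le_opNorm _).trans <| by gcongr; exact hJ x

end OperatorNorm

section Spectrum

variable {𝕜 E : Type*} [NontriviallyNormedField 𝕜] [NormedAddCommGroup E] [NormedSpace 𝕜 E]

theorem mem_spectrum_of_apply_eq_smul [CompleteSpace E] {T : E →L[𝕜] E} {μ : 𝕜} {v : E}
    (hv : v ≠ 0) (h : T v = μ • v) : μ ∈ spectrum 𝕜 T := by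
  rw [ContinuousLinearMap.spectrum_eq]
  exact Module.End.HasEigenvalue.mem_spectrum
    (Module.End.hasEigenvalue_of_hasEigenvector ⟨Module.End.mem_eigenspace_iff.mpr h, hv⟩)

theorem mem_spectrum_of_forall_snd_apply {T : (E × 𝕜) →L[𝕜] (E × 𝕜)} {ν : 𝕜}
    (h : ∀ u, (T u).2 = ν * u.2) : ν ∈ spectrum 𝕜 T := by
  rw [spectrum.mem_iff]
  intro hunit
  have := congr((($(hunit.mul_val_inv) : (E × 𝕜) →L[𝕜] (E × 𝕜)) ((0 : E), (1 : 𝕜))).2)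
  rw [mul_apply_eq_comp, sub_apply, Prod.snd_sub, h] at this
  simp [Algebra.algebraMap_eq_smul_one] at this

end Spectrum

section Ghat

open ContinuousLinearMap

variable {H : Type*} [NormedAddCommGroup H] [InnerProductSpace ℂ H] {e : H}

theorem exists_eq_smul_add_mem_orthogonal (x : H) : ∃ c : ℂ, ∃ p ∈ (ℂ ∙ e)ᗮ, x = c • e + p := by
  obtain ⟨y, hy, p, hp, rfl⟩ := (ℂ ∙ e).exists_add_mem_mem_orthogonal x
  obtain ⟨c, rfl⟩ := Submodule.mem_span_singleton.mp hy
  exact ⟨c, p, hp, rfl⟩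

theorem inner_smul_add_orthogonalProjectionOnto (he : ‖e‖ = 1) (y : H) :
    ⟪e, y⟫_ℂ • e + ((ℂ ∙ e)ᗮ.orthogonalProjectionOnto y : H) = y := by
  rw [Submodule.coe_orthogonalProjectionOnto_apply, Submodule.starProjection_orthogonal_val,
    Submodule.starProjection_unit_singleton ℂ he, add_sub_cancel]

theorem hatA_smul_left (c : ℂ) (u v : H × ℂ) : hatA e (c • u) v = c * hatA e u v := by
  simp only [hatA, Prod.smul_fst, Prod.smul_snd, smul_eq_mul, inner_smul_right, inner_sub_left,
    inner_sub_right, inner_smul_left]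
  ring

theorem hatA_smul_right (c : ℂ) (u v : H × ℂ) : hatA e u (c • v) = conj c * hatA e u v := by
  simp only [hatA, Prod.smul_fst, Prod.smul_snd, smul_eq_mul, inner_smul_right, inner_smul_left,
    inner_sub_left, inner_sub_right, map_mul]
  ring

theorem hatA_smul_add_mk (he : ‖e‖ = 1) {p r : H} (hp : p ∈ (ℂ ∙ e)ᗮ) (hr : r ∈ (ℂ ∙ e)ᗮ)
    (c d z w : ℂ) :
    hatA e (c • e + p, z) (d • e + r, w) = -z * conj d - c * conj w + ⟪r, p⟫_ℂ := by
  rw [Submodule.mem_orthogonal_singleton_iff_inner_right] at hp hr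
  have hr' : ⟪r, e⟫_ℂ = 0 := by rw [← inner_conj_symm, hr, map_zero]
  simp only [hatA, inner_add_right, inner_add_left, inner_smul_right, inner_smul_left,
    inner_self_eq_one_of_norm_eq_one he, hp, hr, hr', inner_sub_left, inner_sub_right]
  ring

theorem hatA_mk_of_mem_orthogonal (he : ‖e‖ = 1) {p r : H} (hp : p ∈ (ℂ ∙ e)ᗮ)
    (hr : r ∈ (ℂ ∙ e)ᗮ) (z w : ℂ) : hatA e (p, z) (r, w) = ⟪r, p⟫_ℂ := by
  simpa using hatA_smul_add_mk he hp hr 0 0 z w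

theorem hatA_e_zero_left (he : ‖e‖ = 1) (w : H × ℂ) : hatA e (e, 0) w = -conj w.2 := by
  simp [hatA, he]

theorem hatA_e_one_self (he : ‖e‖ = 1) : hatA e (e, 1) (e, 1) = -2 := by
  simp [hatA, he]
  norm_num

theorem memGhat.comp {T S : (H × ℂ) →L[ℂ] (H × ℂ)} (hT : memGhat e T) (hS : memGhat e S) :
    memGhat e (T ∘L S) :=
  ⟨hT.1.comp hS.1, fun u v => (hT.2 _ _).trans (hS.2 u v)⟩

theorem memGhat.symm {R : (H × ℂ) ≃L[ℂ] (H × ℂ)} (hR : memGhat e R) : memGhat e R.symm :=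
  ⟨R.symm.bijective, fun u v => by simpa using (hR.2 (R.symm u) (R.symm v)).symm⟩

theorem memGhat.exists_continuousLinearEquiv [CompleteSpace H] {T : (H × ℂ) →L[ℂ] (H × ℂ)}
    (hT : memGhat e T) : ∃ R : (H × ℂ) ≃L[ℂ] (H × ℂ), (R : (H × ℂ) →L[ℂ] (H × ℂ)) = T :=
  ⟨.ofBijective T (LinearMap.ker_eq_bot.mpr hT.1.1) (LinearMap.range_eq_top.mpr hT.1.2),
    ContinuousLinearEquiv.coe_ofBijective _ _ _⟩

/-- The Heisenberg translation `(1, a, s)` when `a ⊥ e`. -/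
noncomputable def heisenbergTranslation (e a : H) (s : ℂ) : (H × ℂ) →L[ℂ] (H × ℂ) :=
  (fst ℂ H ℂ + toSpanSingleton ℂ e ∘L (innerSL ℂ a ∘L fst ℂ H ℂ + s • snd ℂ H ℂ)
    + toSpanSingleton ℂ a ∘L snd ℂ H ℂ).prod (snd ℂ H ℂ)

theorem heisenbergTranslation_apply (e a : H) (s : ℂ) (x : H) (z : ℂ) :
    heisenbergTranslation e a s (x, z) = (x + (⟪a, x⟫_ℂ + s * z) • e + z • a, z) := by
  simp [heisenbergTranslation, toSpanSingleton_apply, add_smul, smul_smul]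

theorem heisenbergTranslation_neg_conj_apply {a : H} (ha : a ∈ (ℂ ∙ e)ᗮ) {s : ℂ}
    (hs : s + conj s = ⟪a, a⟫_ℂ) (u : H × ℂ) :
    heisenbergTranslation e (-a) (conj s) (heisenbergTranslation e a s u) = u := by
  rw [Submodule.mem_orthogonal_singleton_iff_inner_left] at ha
  obtain ⟨x, z⟩ := u
  simp only [heisenbergTranslation_apply, inner_add_right, inner_smul_right, inner_neg_left,
    ha, Prod.mk.injEq, and_true]
  linear_combination (norm := module) (z * hs) • e

theorem memGhat_heisenbergTranslation (he : ‖e‖ = 1) {a : H} (ha : a ∈ (ℂ ∙ e)ᗮ) {s : ℂ}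
    (hs : s + conj s = ⟪a, a⟫_ℂ) : memGhat e (heisenbergTranslation e a s) := by
  have hs' : conj s + conj (conj s) = ⟪-a, -a⟫_ℂ := by
    rw [Complex.conj_conj, inner_neg_neg, ← hs, add_comm]
  refine ⟨Function.bijective_iff_has_inverse.mpr ⟨_, heisenbergTranslation_neg_conj_apply ha hs,
    fun u => by simpa only [neg_neg, Complex.conj_conj] using
      heisenbergTranslation_neg_conj_apply (neg_mem ha) hs' u⟩, ?_⟩
  rw [Submodule.mem_orthogonal_singleton_iff_inner_left] at ha
  have ha' : ⟪e, a⟫_ℂ = 0 := by rw [← inner_conj_symm, ha, map_zero]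
  rintro ⟨x, z⟩ ⟨y, w⟩
  simp only [hatA, heisenbergTranslation_apply, inner_add_right, inner_add_left, inner_smul_right,
    inner_smul_left, inner_sub_left, inner_sub_right, inner_self_eq_one_of_norm_eq_one he, ha, ha',
    map_add, map_mul, inner_conj_symm]
  linear_combination (-z * conj w) * hs

/-- The involution of `Ĝ` exchanging the null lines `ℂ (e, 0)` and `ℂ (0, 1)`. -/
noncomputable def ghatInversion (e : H) : (H × ℂ) →L[ℂ] (H × ℂ) :=
  (fst ℂ H ℂ + toSpanSingleton ℂ e ∘L (snd ℂ H ℂ - innerSL ℂ e ∘L fst ℂ H ℂ)).prod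
    (innerSL ℂ e ∘L fst ℂ H ℂ)

theorem ghatInversion_apply (e x : H) (z : ℂ) :
    ghatInversion e (x, z) = (x + (z - ⟪e, x⟫_ℂ) • e, ⟪e, x⟫_ℂ) := by
  simp [ghatInversion, toSpanSingleton_apply, sub_smul]

theorem memGhat_ghatInversion (he : ‖e‖ = 1) : memGhat e (ghatInversion e) := by
  have hinv : Function.Involutive (ghatInversion e) := by
    rintro ⟨x, z⟩
    simp only [ghatInversion_apply, inner_add_right, inner_smul_right,
      inner_self_eq_one_of_norm_eq_one he, Prod.mk.injEq]
    constructor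
    · match_scalars <;> ring
    · ring
  refine ⟨hinv.bijective, ?_⟩
  rintro ⟨x, z⟩ ⟨y, w⟩
  simp only [hatA, ghatInversion_apply, inner_add_right, inner_add_left, inner_smul_right,
    inner_smul_left, inner_sub_left, inner_sub_right, inner_self_eq_one_of_norm_eq_one he,
    map_add, map_mul, map_sub, inner_conj_symm]
  ring

theorem exists_eq_smul_of_hatA_self_eq_zero (he : ‖e‖ = 1) {x : H}
    (hnull : hatA e (x, 0) (x, 0) = 0) : ∃ c : ℂ, ((x, 0) : H × ℂ) = c • (e, 0) := by
  obtain ⟨c, p, hp, rfl⟩ := exists_eq_smul_add_mem_orthogonal (e := e) x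
  rw [hatA_smul_add_mk he hp hp] at hnull
  simp only [map_zero, neg_zero, zero_mul, mul_zero, sub_zero, zero_add] at hnull
  exact ⟨c, by simp [inner_self_eq_zero.mp hnull]⟩

theorem exists_memGhat_apply_mk_one_eq (he : ‖e‖ = 1) {x : H}
    (hnull : hatA e (x, 1) (x, 1) = 0) :
    ∃ R : (H × ℂ) →L[ℂ] (H × ℂ), memGhat e R ∧ R (x, 1) = (e, 0) := by
  obtain ⟨α, p, hp, rfl⟩ := exists_eq_smul_add_mem_orthogonal (e := e) x
  rw [hatA_smul_add_mk he hp hp, map_one] at hnull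
  have hs : (⟪p, p⟫_ℂ - α) + conj (⟪p, p⟫_ℂ - α) = ⟪-p, -p⟫_ℂ := by
    rw [inner_neg_neg, map_sub, inner_conj_symm]
    linear_combination hnull
  -- The translation `(-p, ‖p‖² - α)` moves `(α e + p, 1)` to `(0, 1)`.
  refine ⟨ghatInversion e ∘L heisenbergTranslation e (-p) (⟪p, p⟫_ℂ - α),
    (memGhat_ghatInversion he).comp (memGhat_heisenbergTranslation he (neg_mem hp) hs), ?_⟩
  rw [Submodule.mem_orthogonal_singleton_iff_inner_left] at hp
  have hzero : α • e + p + (⟪-p, α • e + p⟫_ℂ + (⟪p, p⟫_ℂ - α) * 1) • e + (1 : ℂ) • -p = 0 := by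
    rw [inner_neg_left, inner_add_right, inner_smul_right, hp]
    module
  rw [comp_apply, heisenbergTranslation_apply, hzero, ghatInversion_apply]
  simp

theorem exists_memGhat_symm_apply_eq_smul [CompleteSpace H] (he : ‖e‖ = 1) {v : H × ℂ}
    (hv : v ≠ 0) (hnull : hatA e v v = 0) :
    ∃ R : (H × ℂ) ≃L[ℂ] (H × ℂ), memGhat e R ∧ ∃ c : ℂ, R.symm (e, 0) = c • v := by
  obtain ⟨x, z⟩ := v
  rcases eq_or_ne z 0 with rfl | hz
  · obtain ⟨c, hc⟩ := exists_eq_smul_of_hatA_self_eq_zero he hnull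
    rw [hc, smul_ne_zero_iff] at hv
    refine ⟨.refl ℂ _, ⟨Function.bijective_id, fun _ _ => rfl⟩, c⁻¹, ?_⟩
    rw [hc, smul_smul, inv_mul_cancel₀ hv.1, one_smul]
    rfl
  · have hw : z⁻¹ • (x, z) = (z⁻¹ • x, 1) := Prod.ext rfl (inv_mul_cancel₀ hz)
    have hwnull : hatA e (z⁻¹ • x, 1) (z⁻¹ • x, 1) = 0 := by
      rw [← hw, hatA_smul_left, hatA_smul_right, hnull, mul_zero, mul_zero]
    obtain ⟨R₀, hR₀, hR₀w⟩ := exists_memGhat_apply_mk_one_eq he hwnull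
    obtain ⟨R, rfl⟩ := hR₀.exists_continuousLinearEquiv
    exact ⟨R, hR₀, z⁻¹, R.symm_apply_eq.mpr (hw ▸ hR₀w).symm⟩

theorem re_conj_mul_eq_half_norm_sq {lam b : ℂ} {a : H} (hlam : ‖lam‖ = 1)
    (h : -lam * conj b - b * conj lam + ⟪a, a⟫_ℂ = 0) :
    (conj lam * b).re = 1 / 2 * ‖conj lam • a‖ ^ 2 := by
  have hre := Complex.add_conj (conj lam * b)
  rw [map_mul, Complex.conj_conj] at hre
  rw [inner_self_eq_norm_sq_to_K] at h
  rw [norm_smul, Complex.norm_conj, hlam, one_mul]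
  have : ((2 * (conj lam * b).re : ℝ) : ℂ) = ((‖a‖ ^ 2 : ℝ) : ℂ) := by
    push_cast at hre ⊢
    linear_combination -hre - h
  linarith [Complex.ofReal_injective this]

variable {T : (H × ℂ) →L[ℂ] (H × ℂ)} {lam : ℂ}

/-- `T` on `H × {0}`, an invariant hyperplane once `(T u).2 = λ u.2`. -/
noncomputable def restrictFst (T : (H × ℂ) →L[ℂ] (H × ℂ)) : H →L[ℂ] H :=
  fst ℂ H ℂ ∘L T ∘L inl ℂ H ℂ

/-- When `restrictFst T` fixes the line `ℂ e`, this is the map it induces on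
`H ⧸ ℂ e ≅ (ℂ ∙ e)ᗮ`. -/
noncomputable def compression (e : H) (T : (H × ℂ) →L[ℂ] (H × ℂ)) :
    (ℂ ∙ e)ᗮ →L[ℂ] (ℂ ∙ e)ᗮ :=
  (ℂ ∙ e)ᗮ.orthogonalProjectionOnto ∘L restrictFst T ∘L (ℂ ∙ e)ᗮ.subtypeL

theorem compression_apply (e : H) (T : (H × ℂ) →L[ℂ] (H × ℂ)) (x : (ℂ ∙ e)ᗮ) :
    compression e T x = (ℂ ∙ e)ᗮ.orthogonalProjectionOnto (restrictFst T x) :=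
  rfl

theorem apply_mk_zero_eq_restrictFst (hsnd : ∀ u, (T u).2 = lam * u.2) (y : H) :
    T (y, 0) = (restrictFst T y, 0) :=
  Prod.ext rfl ((hsnd _).trans (mul_zero lam))

theorem semiconj_restrictFst_compression (hTe : T (e, 0) = lam • (e, 0)) :
    Function.Semiconj (ℂ ∙ e)ᗮ.orthogonalProjectionOnto (restrictFst T) (compression e T) := by
  intro y
  obtain ⟨c, p, hp, rfl⟩ := exists_eq_smul_add_mem_orthogonal (e := e) y
  have hTe' : restrictFst T e = lam • e := congr(($hTe).1)
  simp only [map_add, map_smul, hTe', smul_zero, zero_add,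
    Submodule.orthogonalProjectionOnto_orthogonalComplement_singleton_eq_zero,
    Submodule.orthogonalProjectionOnto_mem_subspace_eq_self (⟨p, hp⟩ : (ℂ ∙ e)ᗮ)]
  rfl

namespace memGhat

theorem conj_mul_snd_apply (hT : memGhat e T) (he : ‖e‖ = 1) (hTe : T (e, 0) = lam • (e, 0))
    (u : H × ℂ) : conj lam * (T u).2 = u.2 := by
  have h := hT.2 (e, 0) u
  rw [hTe, hatA_smul_left, hatA_e_zero_left he, hatA_e_zero_left he] at h
  simpa using congr(conj $h)

theorem norm_eq_one (hT : memGhat e T) (he : ‖e‖ = 1) (hTe : T (e, 0) = lam • (e, 0))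
    (hspec : spectrum ℂ T = {lam}) : ‖lam‖ = 1 := by
  have hlam : conj lam ≠ 0 := by
    intro h
    simpa [h] using hT.conj_mul_snd_apply he hTe ((0 : H), 1)
  have hsnd : ∀ u, (T u).2 = (conj lam)⁻¹ * u.2 := fun u => by
    rw [← hT.conj_mul_snd_apply he hTe u, inv_mul_cancel_left₀ hlam]
  have hmem := mem_spectrum_of_forall_snd_apply hsnd
  rw [hspec, Set.mem_singleton_iff, inv_eq_iff_eq_inv] at hmem
  have hsq : ((‖lam‖ ^ 2 : ℝ) : ℂ) = 1 := by
    rw [Complex.ofReal_pow, ← Complex.conj_mul', hmem, inv_mul_cancel₀ (by simpa using hlam)]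
  exact (pow_eq_one_iff_of_nonneg (norm_nonneg lam) two_ne_zero).mp (mod_cast hsq)

theorem snd_apply_eq_mul (hT : memGhat e T) (he : ‖e‖ = 1) (hTe : T (e, 0) = lam • (e, 0))
    (hlam : ‖lam‖ = 1) (u : H × ℂ) : (T u).2 = lam * u.2 := by
  rw [← hT.conj_mul_snd_apply he hTe u, ← mul_assoc, Complex.mul_conj', hlam]
  simp

theorem inner_compression_apply (hT : memGhat e T) (he : ‖e‖ = 1)
    (hsnd : ∀ u, (T u).2 = lam * u.2) (x y : (ℂ ∙ e)ᗮ) :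
    ⟪compression e T x, compression e T y⟫_ℂ = ⟪x, y⟫_ℂ := by
  have hdecomp : ∀ z : (ℂ ∙ e)ᗮ,
      T (z, 0) = (⟪e, restrictFst T z⟫_ℂ • e + compression e T z, 0) := fun z => by
    rw [apply_mk_zero_eq_restrictFst hsnd, compression_apply,
      inner_smul_add_orthogonalProjectionOnto he]
  have h := hT.2 (y, 0) (x, 0)
  rw [hdecomp, hdecomp, hatA_smul_add_mk he (Submodule.coe_mem _) (Submodule.coe_mem _),
    hatA_mk_of_mem_orthogonal he (Submodule.coe_mem _) (Submodule.coe_mem _)] at h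
  simpa using h

theorem compression_surjective (hT : memGhat e T) (hTe : T (e, 0) = lam • (e, 0))
    (hsnd : ∀ u, (T u).2 = lam * u.2) (hlam : lam ≠ 0) :
    Function.Surjective (compression e T) := by
  intro x
  obtain ⟨⟨y, z⟩, hy⟩ := hT.1.2 ((x : H), 0)
  obtain rfl : z = 0 := by simpa [hlam] using (hsnd (y, z)).symm.trans congr(($hy).2)
  rw [apply_mk_zero_eq_restrictFst hsnd, Prod.mk.injEq] at hy
  refine ⟨(ℂ ∙ e)ᗮ.orthogonalProjectionOnto y, ?_⟩
  rw [← semiconj_restrictFst_compression hTe y, hy.1,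
    Submodule.orthogonalProjectionOnto_mem_subspace_eq_self]

theorem compression_mem_unitary [CompleteSpace H] (hT : memGhat e T) (he : ‖e‖ = 1)
    (hTe : T (e, 0) = lam • (e, 0)) (hsnd : ∀ u, (T u).2 = lam * u.2) (hlam : lam ≠ 0) :
    compression e T ∈ unitary ((ℂ ∙ e)ᗮ →L[ℂ] (ℂ ∙ e)ᗮ) := by
  have hstar : star (compression e T) * compression e T = 1 := by
    rw [star_eq_adjoint, mul_def]
    exact (compression e T).inner_map_map_iff_adjoint_comp_self.mp
      (hT.inner_compression_apply he hsnd)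
  refine IsUnit.mem_unitary_of_star_mul_self (isUnit_iff_bijective.mpr ⟨?_, ?_⟩) hstar
  · exact Function.LeftInverse.injective (g := ⇑(star (compression e T))) fun x =>
      congr($hstar x)
  · exact hT.compression_surjective hTe hsnd hlam

variable [CompleteSpace H]

/-- `compression e T - λ` is normal, and its spectral radius is at most that of `T - λ`,
which is `0`. -/
theorem compression_eq_algebraMap (hT : memGhat e T) (he : ‖e‖ = 1)
    (hTe : T (e, 0) = lam • (e, 0)) (hspec : spectrum ℂ T = {lam}) :
    compression e T = algebraMap ℂ _ lam := by
  have hlam := hT.norm_eq_one he hTe hspec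
  have hsnd := hT.snd_apply_eq_mul he hTe hlam
  have hρ : spectralRadius ℂ (T - algebraMap ℂ _ lam) = 0 := by
    rw [spectralRadius, ← spectrum.sub_singleton_eq, hspec, Set.singleton_sub_singleton, sub_self]
    simp
  have := isStarNormal_of_mem_unitary
    (hT.compression_mem_unitary he hTe hsnd (norm_ne_zero_iff.mp (hlam ▸ one_ne_zero)))
  have := IsStarNormal.sub_algebraMap (compression e T) lam
  rw [← sub_eq_zero]
  refine IsStarNormal.eq_zero_of_spectralRadius_eq_zero
    (a := compression e T - algebraMap ℂ _ lam) (le_antisymm ?_ bot_le)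
  have hU : ∀ n : ℕ, ‖(compression e T - algebraMap ℂ _ lam) ^ n‖ ≤
      ‖(restrictFst T - algebraMap ℂ (H →L[ℂ] H) lam) ^ n‖ :=
    norm_pow_le_of_semiconj_of_leftInverse (J := (ℂ ∙ e)ᗮ.subtypeL)
      (ℂ ∙ e)ᗮ.norm_orthogonalProjectionOnto_apply_le (fun _ => le_rfl)
      Submodule.orthogonalProjectionOnto_mem_subspace_eq_self
      ((semiconj_restrictFst_compression hTe).sub_algebraMap lam)
  have hT₀ : ∀ n : ℕ, ‖(restrictFst T - algebraMap ℂ (H →L[ℂ] H) lam) ^ n‖ ≤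
      ‖(T - algebraMap ℂ _ lam) ^ n‖ :=
    norm_pow_le_of_semiconj_of_norm_map (J := inl ℂ H ℂ) (by simp)
      (Function.Semiconj.sub_algebraMap (fun y => (apply_mk_zero_eq_restrictFst hsnd y).symm) lam)
  have h₁ := spectralRadius_le_of_forall_norm_pow_le
    (a := restrictFst T - algebraMap ℂ (H →L[ℂ] H) lam)
    (b := compression e T - algebraMap ℂ _ lam) hU
  have h₂ := spectralRadius_le_of_forall_norm_pow_le
    (a := T - algebraMap ℂ _ lam) (b := restrictFst T - algebraMap ℂ (H →L[ℂ] H) lam) hT₀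
  exact (h₁.trans h₂).trans_eq hρ

theorem apply_mk_zero_of_mem_orthogonal (hT : memGhat e T) (he : ‖e‖ = 1)
    (hTe : T (e, 0) = lam • (e, 0)) (hspec : spectrum ℂ T = {lam}) {p : H}
    (hp : p ∈ (ℂ ∙ e)ᗮ) : T (p, 0) = (⟪e, restrictFst T p⟫_ℂ • e + lam • p, 0) := by
  have hU := congr((($(hT.compression_eq_algebraMap he hTe hspec) ⟨p, hp⟩ : (ℂ ∙ e)ᗮ) : H))
  rw [compression_apply] at hU
  rw [apply_mk_zero_eq_restrictFst (hT.snd_apply_eq_mul he hTe (hT.norm_eq_one he hTe hspec)),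
    ← inner_smul_add_orthogonalProjectionOnto he (restrictFst T p), hU]
  simp [Algebra.algebraMap_eq_smul_one, he,
    Submodule.mem_orthogonal_singleton_iff_inner_right.mp hp]

theorem exists_heisenberg_form (hT : memGhat e T) (he : ‖e‖ = 1)
    (hTe : T (e, 0) = lam • (e, 0)) (hspec : spectrum ℂ T = {lam}) :
    ∃ (a : H) (s : ℂ), a ∈ (ℂ ∙ e)ᗮ ∧ s.re = (1 / 2) * ‖a‖ ^ 2 ∧
      ∀ (x : H) (z : ℂ), T (x, z) = lam •
        ((((⟪e, x⟫_ℂ + ⟪a, x - ⟪e, x⟫_ℂ • e⟫_ℂ + s * z) • e + (x - ⟪e, x⟫_ℂ • e) + z • a, z)) :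
          H × ℂ) := by
  have hlam := hT.norm_eq_one he hTe hspec
  have hconj : conj lam * lam = 1 := by rw [Complex.conj_mul', hlam]; simp
  obtain ⟨b, a, ha, hb⟩ := exists_eq_smul_add_mem_orthogonal (e := e) (T (0, 1)).1
  have h01 : T (0, 1) = (b • e + a, lam) :=
    Prod.ext hb ((hT.snd_apply_eq_mul he hTe hlam _).trans (mul_one lam))
  have hnull := hT.2 (0, 1) (0, 1)
  rw [h01, hatA_smul_add_mk he ha ha, hatA_mk_of_mem_orthogonal he (zero_mem _) (zero_mem _),
    inner_zero_left] at hnull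
  have hq : ∀ p ∈ (ℂ ∙ e)ᗮ, ⟪e, restrictFst T p⟫_ℂ = lam * lam * ⟪a, p⟫_ℂ := fun p hp => by
    have h := hT.2 (p, 0) (0, 1)
    rw [hT.apply_mk_zero_of_mem_orthogonal he hTe hspec hp, h01,
      hatA_smul_add_mk he (Submodule.smul_mem _ lam hp) ha,
      hatA_mk_of_mem_orthogonal he hp (zero_mem _), inner_zero_left, inner_smul_right] at h
    linear_combination (-lam) * h - ⟪e, restrictFst T p⟫_ℂ * hconj
  refine ⟨conj lam • a, conj lam * b, Submodule.smul_mem _ _ ha,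
    re_conj_mul_eq_half_norm_sq hlam hnull, fun x z => ?_⟩
  obtain ⟨c, p, hp, rfl⟩ := exists_eq_smul_add_mem_orthogonal (e := e) x
  have hc : ⟪e, c • e + p⟫_ℂ = c := by
    simp [Submodule.mem_orthogonal_singleton_iff_inner_right.mp hp, he]
  have hsplit : ((c • e + p, z) : H × ℂ) = c • (e, 0) + (p, 0) + z • (0, 1) := by
    ext <;> simp
  rw [hc, add_sub_cancel_left, hsplit, map_add, map_add, map_smul, map_smul, hTe,
    hT.apply_mk_zero_of_mem_orthogonal he hTe hspec hp, hq p hp, h01]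
  ext
  · simp only [Prod.fst_add, Prod.smul_fst, inner_smul_left, Complex.conj_conj]
    linear_combination (norm := module) (-hconj) • ((z * b) • e + z • a)
  · simp only [Prod.snd_add, Prod.smul_snd, smul_eq_mul]
    ring

end memGhat

end Ghat

section
variable {H : Type*} [NormedAddCommGroup H] [InnerProductSpace ℂ H] [CompleteSpace H]

/-- a parabolic element of `Ĝ` with singleton spectrum `{λ}` has
`|λ| = 1` and is conjugate in `Ĝ` to a Heisenberg translation `(λ, a', s)`. -/
theorem parabolic_singleton_spectrum_conj_heisenberg
    (e : H) (he : ‖e‖ = 1) (lam : ℂ)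
    (S : (H × ℂ) →L[ℂ] (H × ℂ)) (hS : memGhat e S)
    (hpar : IsParabolicGhat e S)
    (hspec : spectrum ℂ S = {lam}) :
    ‖lam‖ = 1 ∧
    ∃ R : (H × ℂ) ≃L[ℂ] (H × ℂ), memGhat e (R : (H × ℂ) →L[ℂ] (H × ℂ)) ∧
      ∃ (a' : H) (s : ℂ), a' ∈ (ℂ ∙ e)ᗮ ∧ s ≠ 0 ∧ s.re = (1 / 2) * ‖a'‖ ^ 2 ∧
        IsHeisenberg e
          (R.toContinuousLinearMap ∘L S ∘L R.symm.toContinuousLinearMap) lam a' s := by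
  obtain ⟨hno_timelike, v, hv, ⟨μ, hSv⟩, hnull, -⟩ := hpar
  obtain rfl : μ = lam := by simpa [hspec] using mem_spectrum_of_apply_eq_smul hv hSv
  obtain ⟨R, hR, c, hRv⟩ := exists_memGhat_symm_apply_eq_smul he hv hnull
  set T := R.toContinuousLinearMap ∘L S ∘L R.symm.toContinuousLinearMap
  have hT : memGhat e T := hR.comp (hS.comp hR.symm)
  have hTe : T (e, 0) = μ • (e, 0) := by
    rw [← R.apply_symm_apply (e, 0), hRv]
    simp [T, hSv, smul_comm c μ]
  have hTspec : spectrum ℂ T = {μ} := (spectrum.units_conjugate (u := R.toUnit)).trans hspec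
  have hlam := hT.norm_eq_one he hTe hTspec
  obtain ⟨a, s, ha, hs, hform⟩ := hT.exists_heisenberg_form he hTe hTspec
  have hs0 : s ≠ 0 := by
    rintro rfl
    obtain rfl : a = 0 := by simpa using hs
    have hTe1 : T (e, 1) = μ • (e, 1) := by
      rw [hform]
      simp
    refine hno_timelike ⟨R.symm (e, 1), by simp, ⟨μ, ?_⟩, -2, by norm_num, ?_⟩
    · calc S (R.symm (e, 1)) = R.symm (T (e, 1)) := by simp [T]
        _ = μ • R.symm (e, 1) := by rw [hTe1, map_smul]
    · exact (hR.symm.2 _ _).trans (by rw [hatA_e_one_self he]; norm_num)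
  exact ⟨hlam, R, hR, a, s, ha, hs0, hs, hlam, ha, hs0, hs, hT, hform⟩

end
end

section
/- Let T̂ = (λ, a', s) be a Heisenberg translation and let K = span{(e,0), (a',0), (0,1)} ⊆ H ⊕ ℂ. Then H ⊕ ℂ = K ⊕ K^† (internal direct sum), T̂(K) = K and T̂(K^†) = K^†, T̂ = λ·id on K^†, ker(T̂ − λ·I) = ℂ·(e,0) ⊕ K^†, and: if a' = 0 then (T̂ − λ·I)² = 0 while T̂ − λ·I ≠ 0, whereas if a' ≠ 0 then (T̂ − λ·I)³ = 0 while (T̂ − λ·I)² ≠ 0. -/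
noncomputable section

variable {H : Type*} [NormedAddCommGroup H] [InnerProductSpace ℂ H] [CompleteSpace H]

/-- `K†`, the `Â`-orthogonal complement of a subspace `K` of `H ⊕ ℂ`. -/
def daggerHat (e : H) (K : Submodule ℂ (H × ℂ)) : Submodule ℂ (H × ℂ) where
  carrier := {v | ∀ m ∈ K, hatA e v m = 0}
  add_mem' := by
    intro a b ha hb m hm
    have h1 := ha m hm
    have h2 := hb m hm
    simp only [hatA, Prod.fst_add, Prod.snd_add, inner_add_right, inner_sub_right,
      inner_smul_right, add_smul] at *
    ring_nf at *
    linear_combination h1 + h2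
  zero_mem' := by
    intro m hm
    simp [hatA]
  smul_mem' := by
    intro c a ha m hm
    have h1 := ha m hm
    simp only [hatA, Prod.smul_fst, Prod.smul_snd, inner_smul_right, inner_sub_right,
      smul_eq_mul, smul_smul] at *
    ring_nf at *
    linear_combination c * h1

end

/-!
Put `N = T̂ - λ·I` and `W = span{e, a'}`. Since `a' ⊥ e`, the defining formula reads
`N(x, z) = λ·((⟨x, a'⟩ + s·z)·e + z·a', 0)`. Hence `N` takes values in `W × 0 ⊆ K = W × ℂ`,
which, as `T̂` is onto, gives `T̂(K) = K`; moreover `N²(x, z) = λ²·z·‖a'‖²·(e, 0)` and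
`N(e, 0) = 0`, so `N³ = 0`, and `N² = 0` exactly when `a' = 0`. Testing `Â` against `(e, 0)`,
`(0, 1)` and `W × 0` shows `K† = W^⊥ × 0`, so `H ⊕ ℂ = K ⊕ K†` is the orthogonal decomposition
of `H` along the finite-dimensional `W`. Finally `ker N = a'^⊥ × 0` (a kernel vector with
`z ≠ 0` would force `a' = 0` and then `s·z = 0`), which is `ℂ·(e, 0) ⊕ K†` because `e ⊥ a'`;
in particular `N = 0` on `K†`.
-/

open Submodule

section General
variable {𝕜 M : Type*} [Field 𝕜] [AddCommGroup M] [Module 𝕜 M]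

theorem image_eq_of_sub_smul_mem {T : M → M} (hT : Function.Surjective T) {c : 𝕜} (hc : c ≠ 0)
    {K : Submodule 𝕜 M} (hK : ∀ v, T v - c • v ∈ K) : T '' K = K := by
  ext w
  constructor
  · rintro ⟨v, hv, rfl⟩
    simpa using K.add_mem (hK v) (K.smul_mem c hv)
  · intro hw
    obtain ⟨v, rfl⟩ := hT w
    refine ⟨v, (K.smul_mem_iff hc).mp ?_, rfl⟩
    simpa using K.sub_mem hw (hK v)

theorem image_eq_of_eqOn_smul {T : M → M} {c : 𝕜} (hc : c ≠ 0) {K : Submodule 𝕜 M}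
    (hK : ∀ v ∈ K, T v = c • v) : T '' K = K := by
  ext w
  constructor
  · rintro ⟨v, hv, rfl⟩
    rw [hK v hv]
    exact K.smul_mem c hv
  · intro hw
    refine ⟨c⁻¹ • w, K.smul_mem _ hw, ?_⟩
    rw [hK _ (K.smul_mem _ hw), smul_inv_smul₀ hc]

end General

section Prod
variable {R M N : Type*} [Ring R] [AddCommGroup M] [Module R M] [AddCommGroup N] [Module R N]

theorem span_pair_inl_inr_eq_prod (x y : M) (z : N) :
    span R {((x, 0) : M × N), (y, 0), (0, z)} = ((R ∙ x) ⊔ (R ∙ y)).prod (R ∙ z) := by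
  rw [← span_insert, ← LinearMap.span_inl_union_inr]
  congr 1
  ext
  simp only [Set.mem_insert_iff, Set.mem_singleton_iff, Set.mem_union, Set.image_insert_eq,
    Set.image_singleton, LinearMap.inl_apply, LinearMap.inr_apply]
  tauto

theorem span_singleton_inl (x : M) : R ∙ ((x, 0) : M × N) = (R ∙ x).prod ⊥ := by
  rw [← map_inl, ← span_image]
  simp

theorem isCompl_prod_prod {p p' : Submodule R M} {q q' : Submodule R N} (hp : IsCompl p p')
    (hq : IsCompl q q') : IsCompl (p.prod q) (p'.prod q') where
  disjoint := by rw [disjoint_iff, prod_inf_prod, hp.inf_eq_bot, hq.inf_eq_bot, prod_bot]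
  codisjoint := by rw [codisjoint_iff, prod_sup_prod, hp.sup_eq_top, hq.sup_eq_top, prod_top]

end Prod

section Orthogonal
variable {𝕜 E : Type*} [RCLike 𝕜] [NormedAddCommGroup E] [InnerProductSpace 𝕜 E]

theorem span_singleton_sup_orthogonal_sup_span_singleton {x y : E} (hxy : inner 𝕜 x y = 0) :
    (𝕜 ∙ x) ⊔ ((𝕜 ∙ x) ⊔ (𝕜 ∙ y))ᗮ = (𝕜 ∙ y)ᗮ := by
  rw [← inf_orthogonal]
  refine sup_orthogonal_inf_of_hasOrthogonalProjection ?_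
  rw [span_singleton_le_iff_mem, mem_orthogonal_singleton_iff_inner_left]
  exact hxy

theorem smul_add_smul_eq_zero_iff {x y : E} (hx : x ≠ 0) (hxy : inner 𝕜 x y = 0) (a b : 𝕜) :
    a • x + b • y = 0 ↔ a = 0 ∧ b • y = 0 := by
  refine ⟨fun h => ?_, by rintro ⟨rfl, h⟩; simp [h]⟩
  have ha : a = 0 := by
    simpa [inner_add_right, inner_smul_right, hxy, hx] using congrArg (inner 𝕜 x) h
  exact ⟨ha, by simpa [ha] using h⟩

end Orthogonal

section Dagger
variable {H : Type*} [NormedAddCommGroup H] [InnerProductSpace ℂ H]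

theorem hatA_apply_unit_zero {e : H} (he : ‖e‖ = 1) (v : H × ℂ) : hatA e v (e, 0) = -v.2 := by
  simp [hatA, inner_self_eq_norm_sq_to_K, he]

theorem hatA_apply_zero_one (e : H) (v : H × ℂ) : hatA e v (0, 1) = -inner ℂ e v.1 := by
  simp [hatA]

theorem hatA_eq_inner_of_inner_eq_zero {e : H} {v : H × ℂ} (hv₁ : inner ℂ e v.1 = 0)
    (hv₂ : v.2 = 0) (m : H × ℂ) : hatA e v m = inner ℂ m.1 v.1 := by
  simp [hatA, hv₁, hv₂]

theorem daggerHat_prod_top {e : H} (he : ‖e‖ = 1) {W : Submodule ℂ H} (heW : e ∈ W) :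
    daggerHat e (W.prod ⊤) = Wᗮ.prod ⊥ := by
  ext v
  rw [mem_prod, mem_bot]
  constructor
  · intro hv
    have hv₂ : v.2 = 0 := by simpa [hatA_apply_unit_zero he] using hv (e, 0) ⟨heW, trivial⟩
    have hv₁ : inner ℂ e v.1 = 0 := by
      simpa [hatA_apply_zero_one] using hv (0, 1) ⟨W.zero_mem, trivial⟩
    refine ⟨(mem_orthogonal _ _).mpr fun u hu => ?_, hv₂⟩
    simpa [hatA_eq_inner_of_inner_eq_zero hv₁ hv₂] using hv (u, 0) ⟨hu, trivial⟩
  · rintro ⟨hv₁, hv₂⟩ m hm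
    rw [hatA_eq_inner_of_inner_eq_zero (inner_right_of_mem_orthogonal heW hv₁) hv₂]
    exact inner_right_of_mem_orthogonal hm.1 hv₁

end Dagger

namespace IsHeisenberg
variable {H : Type*} [NormedAddCommGroup H] [InnerProductSpace ℂ H]
  {e a' : H} {T : (H × ℂ) →L[ℂ] (H × ℂ)} {lam s : ℂ}

theorem lam_ne_zero (hT : IsHeisenberg e T lam a' s) : lam ≠ 0 := by
  rintro rfl
  simpa using hT.1

theorem s_ne_zero (hT : IsHeisenberg e T lam a' s) : s ≠ 0 := hT.2.2.1

theorem surjective (hT : IsHeisenberg e T lam a' s) : Function.Surjective T := hT.2.2.2.2.1.1.2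

theorem inner_e_a_eq_zero (hT : IsHeisenberg e T lam a' s) : inner ℂ e a' = 0 :=
  mem_orthogonal_singleton_iff_inner_right.mp hT.2.1

theorem inner_a_e_eq_zero (hT : IsHeisenberg e T lam a' s) : inner ℂ a' e = 0 :=
  mem_orthogonal_singleton_iff_inner_left.mp hT.2.1

theorem apply_sub_smul (hT : IsHeisenberg e T lam a' s) (v : H × ℂ) :
    T v - lam • v = lam • (((inner ℂ a' v.1 + s * v.2) • e + v.2 • a', 0) : H × ℂ) := by
  rw [← Prod.mk.eta (p := v), hT.2.2.2.2.2, ← smul_sub]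
  congr 1
  ext
  · simp only [Prod.fst_sub, inner_sub_right, inner_smul_right, hT.inner_a_e_eq_zero]
    module
  · simp

theorem apply_sub_smul_mem (hT : IsHeisenberg e T lam a' s) (v : H × ℂ) :
    T v - lam • v ∈ ((ℂ ∙ e) ⊔ (ℂ ∙ a')).prod ⊤ := by
  rw [hT.apply_sub_smul]
  exact smul_mem _ _ ⟨add_mem (mem_sup_left (smul_mem _ _ (mem_span_singleton_self e)))
    (mem_sup_right (smul_mem _ _ (mem_span_singleton_self a'))), trivial⟩

theorem apply_eq_smul_iff (he : e ≠ 0) (hT : IsHeisenberg e T lam a' s) (v : H × ℂ) :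
    T v = lam • v ↔ v ∈ (ℂ ∙ a')ᗮ.prod ⊥ := by
  rw [← sub_eq_zero, hT.apply_sub_smul, smul_eq_zero_iff_right hT.lam_ne_zero, Prod.mk_eq_zero,
    smul_add_smul_eq_zero_iff he hT.inner_e_a_eq_zero, mem_prod, mem_bot,
    mem_orthogonal_singleton_iff_inner_right]
  constructor
  · rintro ⟨⟨hcoeff, hv₂⟩, -⟩
    obtain hz | rfl := smul_eq_zero.mp hv₂
    · simpa [hz] using hcoeff
    · simpa [hT.s_ne_zero] using hcoeff
  · rintro ⟨hv₁, hv₂⟩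
    simp [hv₁, hv₂]

theorem apply_unit (he : e ≠ 0) (hT : IsHeisenberg e T lam a' s) :
    T (e, 0) = lam • ((e, 0) : H × ℂ) :=
  (hT.apply_eq_smul_iff he _).mpr
    ⟨mem_orthogonal_singleton_iff_inner_right.mpr hT.inner_a_e_eq_zero, rfl⟩

theorem sub_smul_id_apply (hT : IsHeisenberg e T lam a' s) (v : H × ℂ) :
    (T - lam • ContinuousLinearMap.id ℂ (H × ℂ)) v
      = lam • (((inner ℂ a' v.1 + s * v.2) • e + v.2 • a', 0) : H × ℂ) :=
  hT.apply_sub_smul v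

theorem sub_smul_id_sq_apply (hT : IsHeisenberg e T lam a' s) (v : H × ℂ) :
    ((T - lam • ContinuousLinearMap.id ℂ (H × ℂ)) ∘L
        (T - lam • ContinuousLinearMap.id ℂ (H × ℂ))) v
      = (lam ^ 2 * v.2 * ‖a'‖ ^ 2) • ((e, 0) : H × ℂ) := by
  rw [ContinuousLinearMap.comp_apply, hT.sub_smul_id_apply, hT.sub_smul_id_apply]
  ext
  · simp only [Prod.smul_fst, Prod.smul_snd, inner_smul_right, inner_add_right,
      hT.inner_a_e_eq_zero, inner_self_eq_norm_sq_to_K]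
    module
  · simp

theorem sub_smul_id_cube_eq_zero (he : e ≠ 0) (hT : IsHeisenberg e T lam a' s) :
    (T - lam • ContinuousLinearMap.id ℂ (H × ℂ)) ∘L
      ((T - lam • ContinuousLinearMap.id ℂ (H × ℂ)) ∘L
        (T - lam • ContinuousLinearMap.id ℂ (H × ℂ))) = 0 := by
  refine ContinuousLinearMap.ext fun v => ?_
  rw [ContinuousLinearMap.comp_apply, hT.sub_smul_id_sq_apply, map_smul,
    _root_.sub_apply, hT.apply_unit he]
  simp

theorem sub_smul_id_sq_eq_zero_iff (he : e ≠ 0) (hT : IsHeisenberg e T lam a' s) :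
    (T - lam • ContinuousLinearMap.id ℂ (H × ℂ)) ∘L
        (T - lam • ContinuousLinearMap.id ℂ (H × ℂ)) = 0 ↔ a' = 0 := by
  constructor
  · intro h
    have h01 := hT.sub_smul_id_sq_apply (0, 1)
    rw [h] at h01
    simpa [eq_comm (a := (0 : H × ℂ)), Prod.ext_iff, hT.lam_ne_zero, he] using h01
  · rintro rfl
    exact ContinuousLinearMap.ext fun v => by
      rw [hT.sub_smul_id_sq_apply]
      simp

theorem sub_smul_id_ne_zero (he : e ≠ 0) (hT : IsHeisenberg e T lam a' s) :
    T - lam • ContinuousLinearMap.id ℂ (H × ℂ) ≠ 0 := by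
  intro h
  have h01 : T (0, 1) = lam • ((0, 1) : H × ℂ) := by
    simpa [sub_eq_zero] using congrArg (· ((0, 1) : H × ℂ)) h
  simpa using ((hT.apply_eq_smul_iff he _).mp h01).2

end IsHeisenberg

section
variable {H : Type*} [NormedAddCommGroup H] [InnerProductSpace ℂ H] [CompleteSpace H]

/-- decomposition of `H ⊕ ℂ` determined by a Heisenberg translation
`T̂ = (λ, a', s)`, with `K = span{(e,0), (a',0), (0,1)}`: `H ⊕ ℂ = K ⊕ K†`,
`T̂` preserves both pieces, acts as `λ·id` on `K†`, has `ker(T̂ - λI) = ℂ(e,0) ⊕ K†`,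
and `T̂ - λI` is nilpotent of order exactly 2 (vertical case) or 3 (non-vertical). -/
theorem heisenberg_decomposition
    (e : H) (he : ‖e‖ = 1) (lam : ℂ) (a' : H) (s : ℂ)
    (T : (H × ℂ) →L[ℂ] (H × ℂ)) (hT : IsHeisenberg e T lam a' s)
    (K : Submodule ℂ (H × ℂ))
    (hK : K = Submodule.span ℂ {((e, 0) : H × ℂ), ((a', 0) : H × ℂ), ((0, 1) : H × ℂ)}) :
    -- internal direct sum H ⊕ ℂ = K ⊕ K†
    IsCompl K (daggerHat e K) ∧
    -- T̂(K) = K and T̂(K†) = K†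
    (T '' (K : Set (H × ℂ)) = (K : Set (H × ℂ))) ∧
    (T '' (daggerHat e K : Set (H × ℂ)) = (daggerHat e K : Set (H × ℂ))) ∧
    -- T̂ = λ·id on K†
    (∀ v ∈ daggerHat e K, T v = lam • v) ∧
    -- ker(T̂ - λ·I) = ℂ·(e,0) ⊕ K†
    ({v : H × ℂ | T v = lam • v}
      = ((Submodule.span ℂ {((e, 0) : H × ℂ)} ⊔ daggerHat e K : Submodule ℂ (H × ℂ)) :
          Set (H × ℂ))) ∧
    -- nilpotency degree of T̂ - λ·I
    (a' = 0 →
      (T - lam • ContinuousLinearMap.id ℂ (H × ℂ)) ∘L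
        (T - lam • ContinuousLinearMap.id ℂ (H × ℂ)) = 0 ∧
      T - lam • ContinuousLinearMap.id ℂ (H × ℂ) ≠ 0) ∧
    (a' ≠ 0 →
      (T - lam • ContinuousLinearMap.id ℂ (H × ℂ)) ∘L
        ((T - lam • ContinuousLinearMap.id ℂ (H × ℂ)) ∘L
          (T - lam • ContinuousLinearMap.id ℂ (H × ℂ))) = 0 ∧
      (T - lam • ContinuousLinearMap.id ℂ (H × ℂ)) ∘L
        (T - lam • ContinuousLinearMap.id ℂ (H × ℂ)) ≠ 0) := by
  have he₀ : e ≠ 0 := norm_ne_zero_iff.mp (he ▸ one_ne_zero)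
  set W := (ℂ ∙ e) ⊔ (ℂ ∙ a')
  have heW : e ∈ W := mem_sup_left (mem_span_singleton_self e)
  have hK_prod : K = W.prod ⊤ := by
    rw [hK, span_pair_inl_inr_eq_prod]
    exact congrArg _ Ideal.span_singleton_one
  have hK_dagger : daggerHat e K = Wᗮ.prod ⊥ := by
    rw [hK_prod, daggerHat_prod_top he heW]
  have hT_dagger (v : H × ℂ) (hv : v ∈ daggerHat e K) : T v = lam • v := by
    rw [hK_dagger] at hv
    exact (hT.apply_eq_smul_iff he₀ v).mpr (prod_mono (orthogonal_le le_sup_right) le_rfl hv)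
  refine ⟨?_,
    image_eq_of_sub_smul_mem hT.surjective hT.lam_ne_zero (hK_prod ▸ hT.apply_sub_smul_mem),
    image_eq_of_eqOn_smul hT.lam_ne_zero hT_dagger, hT_dagger, ?_,
    fun h0 => ⟨(hT.sub_smul_id_sq_eq_zero_iff he₀).mpr h0, hT.sub_smul_id_ne_zero he₀⟩,
    fun h0 => ⟨hT.sub_smul_id_cube_eq_zero he₀, mt (hT.sub_smul_id_sq_eq_zero_iff he₀).mp h0⟩⟩
  · rw [hK_dagger, hK_prod]
    exact isCompl_prod_prod W.isCompl_orthogonal isCompl_top_bot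
  · ext v
    rw [Set.mem_ofPred_eq, hT.apply_eq_smul_iff he₀, SetLike.mem_coe, hK_dagger,
      span_singleton_inl, prod_sup_prod,
      span_singleton_sup_orthogonal_sup_span_singleton hT.inner_e_a_eq_zero, bot_sup_eq]

end
end

section
/- Let (λ, 0, s) and (λ, 0, t) be vertical Heisenberg translations (so Re s = Re t = 0 and s, t ≠ 0). Then there exists R̂ ∈ Ĝ with R̂ ∘ (λ,0,s) ∘ R̂⁻¹ = (λ,0,t) if and only if Im(s) and Im(t) have the same sign (Im(s)·Im(t) > 0). Moreover, a non-vertical Heisenberg translation (λ, a', s) with a' ≠ 0 is never conjugate in Ĝ to a vertical Heisenberg translation (λ, 0, t). -/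
section
variable {H : Type*} [NormedAddCommGroup H] [InnerProductSpace ℂ H] [CompleteSpace H]

set_option linter.unusedSectionVars false


lemma hatA_eq (e : H) (he : ‖e‖ = 1) (u v : H × ℂ) :
    hatA e u v = (inner ℂ v.1 u.1 : ℂ) - (inner ℂ e u.1 : ℂ) * (inner ℂ v.1 e : ℂ)
      - u.2 * (inner ℂ v.1 e : ℂ) - (inner ℂ e u.1 : ℂ) * (starRingEnd ℂ) v.2 := by
  have hee : (inner ℂ e e : ℂ) = 1 := by
    rw [inner_self_eq_norm_sq_to_K, he]; norm_num
  simp only [hatA, inner_sub_left, inner_sub_right, inner_smul_left, inner_smul_right, hee,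
    inner_conj_symm, mul_one]
  ring

lemma heis_vert_apply (e : H) {T : (H × ℂ) →L[ℂ] (H × ℂ)} {lam s : ℂ}
    (hT : IsHeisenberg e T lam 0 s) (x : H) (z : ℂ) :
    T (x, z) = lam • (((x + (s * z) • e : H), z) : H × ℂ) := by
  rw [hT.2.2.2.2.2]
  congr 1
  refine Prod.ext ?_ rfl
  show ((inner ℂ e x : ℂ) + (inner ℂ (0:H) _ : ℂ) + s * z) • e
      + (x - (inner ℂ e x : ℂ) • e) + z • (0:H) = x + (s*z) • e
  simp only [inner_zero_left, smul_zero, add_zero, zero_add]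
  module

lemma heis_apply (e : H) {T : (H × ℂ) →L[ℂ] (H × ℂ)} {lam s : ℂ} {a' : H}
    (hT : IsHeisenberg e T lam a' s) (x : H) (z : ℂ) :
    T (x, z) = lam • (((x + ((inner ℂ a' x : ℂ) + s * z) • e + z • a' : H), z) : H × ℂ) := by
  have ha'e : (inner ℂ a' e : ℂ) = 0 := by
    have h := (Submodule.mem_orthogonal _ _).1 hT.2.1 e (Submodule.mem_span_singleton_self e)
    rw [← inner_conj_symm, h, map_zero]
  rw [hT.2.2.2.2.2]
  congr 1
  refine Prod.ext ?_ rfl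
  show ((inner ℂ e x : ℂ) + (inner ℂ a' (x - (inner ℂ e x : ℂ) • e) : ℂ) + s * z) • e
      + (x - (inner ℂ e x : ℂ) • e) + z • a' = x + ((inner ℂ a' x : ℂ) + s * z) • e + z • a'
  simp only [inner_sub_right, inner_smul_right, ha'e, mul_zero, sub_zero]
  module

/-- Dilation `R_μ`. -/
noncomputable def Rdil (e : H) (he : ‖e‖ = 1) (μ : ℝ) (hμ : μ ≠ 0) : (H × ℂ) ≃L[ℂ] (H × ℂ) where
  toLinearEquiv :=
  { toFun := fun p => (p.1 + (((μ:ℂ) - 1) * (inner ℂ e p.1 : ℂ)) • e, (μ:ℂ)⁻¹ * p.2)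
    invFun := fun p => (p.1 + (((μ:ℂ)⁻¹ - 1) * (inner ℂ e p.1 : ℂ)) • e, (μ:ℂ) * p.2)
    map_add' := by
      intro p q
      simp only [Prod.fst_add, Prod.snd_add, inner_add_right, Prod.mk_add_mk]
      refine Prod.ext ?_ ?_
      · show _ = _ + _
        rw [mul_add, add_smul]; abel
      · show _ = _
        ring
    map_smul' := by
      intro c p
      simp only [Prod.smul_fst, Prod.smul_snd, inner_smul_right, RingHom.id_apply,
        Prod.smul_mk, smul_eq_mul]
      refine Prod.ext ?_ ?_
      · show _ = c • (_ + _)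
        rw [smul_add]
        congr 1
        rw [smul_smul]
        ring_nf
      · show _ = _
        ring
    left_inv := by
      intro p
      have hμc : (μ:ℂ) ≠ 0 := by exact_mod_cast hμ
      have hee : (inner ℂ e e : ℂ) = 1 := by
        rw [inner_self_eq_norm_sq_to_K, he]; norm_num
      refine Prod.ext ?_ ?_
      · show p.1 + (((μ:ℂ) - 1) * _) • e + _ • e = p.1
        simp only [inner_add_right, inner_smul_right, hee, mul_one]
        match_scalars <;> field_simp <;> try ring
      · show (μ:ℂ) * ((μ:ℂ)⁻¹ * p.2) = p.2
        field_simp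
    right_inv := by
      intro p
      have hμc : (μ:ℂ) ≠ 0 := by exact_mod_cast hμ
      have hee : (inner ℂ e e : ℂ) = 1 := by
        rw [inner_self_eq_norm_sq_to_K, he]; norm_num
      refine Prod.ext ?_ ?_
      · show p.1 + (((μ:ℂ)⁻¹ - 1) * _) • e + _ • e = p.1
        simp only [inner_add_right, inner_smul_right, hee, mul_one]
        match_scalars <;> field_simp <;> try ring
      · show (μ:ℂ)⁻¹ * ((μ:ℂ) * p.2) = p.2
        field_simp }
  continuous_toFun := by
    apply Continuous.prodMk
    · exact continuous_fst.add
        (((continuous_const.mul (continuous_const.inner continuous_fst)).smul continuous_const))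
    · exact continuous_const.mul continuous_snd
  continuous_invFun := by
    apply Continuous.prodMk
    · exact continuous_fst.add
        (((continuous_const.mul (continuous_const.inner continuous_fst)).smul continuous_const))
    · exact continuous_const.mul continuous_snd

lemma Rdil_apply (e : H) (he : ‖e‖ = 1) (μ : ℝ) (hμ : μ ≠ 0) (p : H × ℂ) :
    Rdil e he μ hμ p = (p.1 + (((μ:ℂ) - 1) * (inner ℂ e p.1 : ℂ)) • e, (μ:ℂ)⁻¹ * p.2) := rfl

lemma Rdil_symm_apply (e : H) (he : ‖e‖ = 1) (μ : ℝ) (hμ : μ ≠ 0) (p : H × ℂ) :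
    (Rdil e he μ hμ).symm p
      = (p.1 + (((μ:ℂ)⁻¹ - 1) * (inner ℂ e p.1 : ℂ)) • e, (μ:ℂ) * p.2) := rfl

lemma Rdil_mem (e : H) (he : ‖e‖ = 1) (μ : ℝ) (hμ : μ ≠ 0) :
    memGhat e ((Rdil e he μ hμ : (H × ℂ) →L[ℂ] (H × ℂ))) := by
  have hee : (inner ℂ e e : ℂ) = 1 := by
    rw [inner_self_eq_norm_sq_to_K, he]; norm_num
  have hμc : (μ:ℂ) ≠ 0 := by exact_mod_cast hμ
  constructor
  · exact (Rdil e he μ hμ).bijective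
  · intro u v
    simp only [ContinuousLinearEquiv.coe_coe, Rdil_apply]
    rw [hatA_eq e he, hatA_eq e he]
    simp only [inner_add_left, inner_add_right, inner_smul_left, inner_smul_right, hee,
      inner_conj_symm, map_mul, map_sub, map_one, map_inv₀, Complex.conj_ofReal, mul_one]
    field_simp
    ring

/-- two vertical Heisenberg translations `(λ,0,s)` and `(λ,0,t)` are
conjugate in `Ĝ` iff `Im s` and `Im t` have the same sign; and a non-vertical
Heisenberg translation is never conjugate in `Ĝ` to a vertical one. -/
theorem vertical_heisenberg_conjugacy
    (e : H) (he : ‖e‖ = 1) (lam : ℂ) (s t : ℂ)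
    (T S : (H × ℂ) →L[ℂ] (H × ℂ))
    (hT : IsHeisenberg e T lam 0 s) (hS : IsHeisenberg e S lam 0 t) :
    ((∃ R : (H × ℂ) ≃L[ℂ] (H × ℂ), memGhat e (R : (H × ℂ) →L[ℂ] (H × ℂ)) ∧
        ∀ v : H × ℂ, R (T (R.symm v)) = S v) ↔ s.im * t.im > 0) ∧
    (∀ (a' : H) (s₂ : ℂ) (T₂ : (H × ℂ) →L[ℂ] (H × ℂ)),
      a' ≠ 0 → IsHeisenberg e T₂ lam a' s₂ →
      ¬ ∃ R : (H × ℂ) ≃L[ℂ] (H × ℂ), memGhat e (R : (H × ℂ) →L[ℂ] (H × ℂ)) ∧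
          ∀ v : H × ℂ, R (T₂ (R.symm v)) = S v) := by
  have hee : (inner ℂ e e : ℂ) = 1 := by
    rw [inner_self_eq_norm_sq_to_K, he]; norm_num
  have hlam0 : lam ≠ 0 := by
    intro h
    have := hT.1
    rw [h] at this
    simp at this
  have hsre : s.re = 0 := by simpa using hT.2.2.2.1
  have htre : t.re = 0 := by simpa using hS.2.2.2.1
  have hsne : s ≠ 0 := hT.2.2.1
  have htne : t ≠ 0 := hS.2.2.1
  have hsim : s.im ≠ 0 := by
    intro h
    exact hsne (Complex.ext hsre h)
  have htim : t.im ≠ 0 := by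
    intro h
    exact htne (Complex.ext htre h)
  constructor
  · constructor
    · rintro ⟨R, hR, hconj⟩
      set v : H × ℂ := R.symm ((0:H), (1:ℂ)) with hv
      have hRv : R v = ((0:H), (1:ℂ)) := R.apply_symm_apply _
      have h1 : hatA e (R (T v)) (R v) = hatA e (T v) v := hR.2 _ _
      have h2 := hconj ((0:H), (1:ℂ))
      rw [← hv] at h2
      rw [h2, hRv] at h1
      -- h1 : hatA e (S (0,1)) (0,1) = hatA e (T v) v
      have hvv : hatA e v v = 0 := by
        have h3 : hatA e (R v) (R v) = hatA e v v := hR.2 _ _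
        rw [hRv] at h3
        rw [← h3, hatA_eq e he]
        simp
      have hS01 : S ((0:H), (1:ℂ)) = lam • ((((0:H) + (t * 1) • e : H), (1:ℂ)) : H × ℂ) :=
        heis_vert_apply e hS 0 1
      have hTv : T v = lam • (((v.1 + (s * v.2) • e : H), v.2) : H × ℂ) :=
        heis_vert_apply e hT v.1 v.2
      rw [hS01, hTv] at h1
      rw [hatA_eq e he, hatA_eq e he] at h1
      rw [hatA_eq e he] at hvv
      simp only [Prod.smul_fst, Prod.smul_snd, smul_eq_mul, smul_smul, zero_add, mul_one,
        inner_add_left, inner_add_right, inner_smul_left, inner_smul_right, inner_zero_left,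
        inner_zero_right, hee, inner_conj_symm, map_one, mul_zero, zero_mul, sub_zero,
        add_zero] at h1 hvv
      have h5 : lam * t = lam * (s * (v.2 * (starRingEnd ℂ) v.2)) := by
        linear_combination -h1 - lam * hvv
      have ht : t = s * (v.2 * (starRingEnd ℂ) v.2) := mul_left_cancel₀ hlam0 h5
      rw [Complex.mul_conj] at ht
      have hv2 : v.2 ≠ 0 := by
        intro h
        rw [h] at ht
        simp at ht
        exact htne ht
      have h6 : t.im = s.im * Complex.normSq v.2 := by
        rw [ht]; simp [Complex.mul_im]
      rw [h6]
      nlinarith [mul_pos (mul_self_pos.mpr hsim) (Complex.normSq_pos.mpr hv2)]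
    · intro hst
      have hdiv : 0 < t.im / s.im := by
        rcases mul_pos_iff.mp hst with ⟨h1, h2⟩ | ⟨h1, h2⟩
        · exact div_pos h2 h1
        · exact div_pos_of_neg_of_neg h2 h1
      set μ := Real.sqrt (t.im / s.im) with hμdef
      have hμpos : 0 < μ := Real.sqrt_pos.mpr hdiv
      have hμc : (μ:ℂ) ≠ 0 := by exact_mod_cast hμpos.ne'
      have hμsq : μ ^ 2 = t.im / s.im := Real.sq_sqrt hdiv.le
      have hts : s * (μ:ℂ) ^ 2 = t := by
        have h1 : ((μ:ℂ)) ^ 2 = ((t.im / s.im : ℝ) : ℂ) := by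
          rw [← hμsq]; push_cast; ring
        rw [h1]
        apply Complex.ext
        · simp [Complex.mul_re, hsre, htre]
        · simp only [Complex.mul_im, Complex.ofReal_re, Complex.ofReal_im, mul_zero, zero_add,
            add_zero, hsre, zero_mul]
          field_simp
      refine ⟨Rdil e he μ hμpos.ne', Rdil_mem e he μ hμpos.ne', ?_⟩
      intro p
      rw [Rdil_symm_apply, heis_vert_apply e hT, map_smul]
      have hSp : S p = lam • (((p.1 + (t * p.2) • e : H), p.2) : H × ℂ) :=
        heis_vert_apply e hS p.1 p.2
      rw [hSp, Rdil_apply]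
      congr 1
      refine Prod.ext ?_ ?_
      · show p.1 + _ • e + _ • e + _ • e = p.1 + (t * p.2) • e
        simp only [inner_add_right, inner_smul_right, hee, mul_one]
        match_scalars
        · ring
        · field_simp
          linear_combination (μ:ℂ) * p.2 * hts
      · show (μ:ℂ)⁻¹ * ((μ:ℂ) * p.2) = p.2
        field_simp
  · rintro a' s₂ T₂ ha'ne hT₂ ⟨R, hR, hconj⟩
    have ha'e : (inner ℂ e a' : ℂ) = 0 :=
      (Submodule.mem_orthogonal _ _).1 hT₂.2.1 e (Submodule.mem_span_singleton_self e)
    set w : H × ℂ := R ((0:H), (1:ℂ)) with hw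
    have hsv : R.symm w = ((0:H), (1:ℂ)) := R.symm_apply_apply _
    have h2 := hconj w
    rw [hsv] at h2
    have h3 : hatA e (R (T₂ ((0:H),(1:ℂ)))) (R ((0:H),(1:ℂ))) = hatA e (T₂ ((0:H),(1:ℂ))) ((0:H),(1:ℂ)) :=
      hR.2 _ _
    rw [h2, ← hw] at h3
    have hww : hatA e w w = 0 := by
      have h4 : hatA e (R ((0:H),(1:ℂ))) (R ((0:H),(1:ℂ))) = hatA e ((0:H),(1:ℂ)) ((0:H),(1:ℂ)) := hR.2 _ _
      rw [← hw] at h4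
      rw [h4, hatA_eq e he]
      simp
    have hSw : S w = lam • (((w.1 + (t * w.2) • e : H), w.2) : H × ℂ) :=
      heis_vert_apply e hS w.1 w.2
    have hT2 : T₂ ((0:H),(1:ℂ)) = lam •
        ((((0:H) + ((inner ℂ a' (0:H) : ℂ) + s₂ * 1) • e + (1:ℂ) • a' : H), (1:ℂ)) : H × ℂ) :=
      heis_apply e hT₂ 0 1
    rw [hSw, hT2] at h3
    rw [hatA_eq e he, hatA_eq e he] at h3
    rw [hatA_eq e he] at hww
    simp only [Prod.smul_fst, Prod.smul_snd, smul_eq_mul, smul_smul, zero_add, mul_one, one_smul,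
      inner_add_left, inner_add_right, inner_smul_left, inner_smul_right, inner_zero_left,
      inner_zero_right, hee, ha'e, inner_conj_symm, map_one, mul_zero, zero_mul, sub_zero,
      add_zero] at h3 hww
    have h5 : lam * s₂ = lam * (t * (w.2 * (starRingEnd ℂ) w.2)) := by
      linear_combination h3 - lam * hww
    have hs2 : s₂ = t * (w.2 * (starRingEnd ℂ) w.2) := mul_left_cancel₀ hlam0 h5
    rw [Complex.mul_conj] at hs2
    have hre : s₂.re = 0 := by
      rw [hs2]
      simp [Complex.mul_re, htre]
    have hpos : s₂.re = (1 / 2) * ‖a'‖ ^ 2 := hT₂.2.2.2.1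
    have : (0:ℝ) < ‖a'‖ := norm_pos_iff.mpr ha'ne
    nlinarith

end
end
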